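/- arXiv:1811.11554 — 8 statements merged into one kernel-verified Lean document; each statement's English description precedes it below -/
import Mathlib

section
/- Let G be a finite group with a normal cyclic subgroup A such that G/A is nilpotent. Then the centralizer C_G(A) is a normal nilpotent subgroup of G containing the commutator subgroup G'; in particular every element of G' commutes with every element of A. -/
open scoped Classical Pointwise

noncomputable section

namespace ZCPaper

variable {G : Type*} [Group G]

/-- The augmentation of an element of the integral group ring `ℤG`. -/
def aug (u : MonoidAlgebra ℤ G) : ℤ := Finsupp.sum u.coeff fun _ a => a

/-- The canonical inclusion `ℤG → ℚG`. -/
def toQ : MonoidAlgebra ℤ G →+* MonoidAlgebra ℚ G :=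
  MonoidAlgebra.liftNCRingHom (MonoidAlgebra.singleOneRingHom.comp (Int.castRingHom ℚ))
    (MonoidAlgebra.of ℚ G) (fun r g => by
      show Commute (MonoidAlgebra.single 1 ((r : ℚ))) (MonoidAlgebra.single g 1)
      unfold Commute SemiconjBy
      rw [MonoidAlgebra.single_mul_single, MonoidAlgebra.single_mul_single,
        one_mul, mul_one, one_mul, mul_one])

/-- `u ∈ ℤG` is rationally conjugate to the group element `g`, i.e. `v⁻¹ u v = g`
for some unit `v` of `ℚG`. -/
def RatConj (u : MonoidAlgebra ℤ G) (g : G) : Prop :=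
  ∃ v : (MonoidAlgebra ℚ G)ˣ,
    (↑v⁻¹ : MonoidAlgebra ℚ G) * toQ u * ↑v = MonoidAlgebra.of ℚ G g

/-- The partial augmentation `ε_g(u)`: the sum of the coefficients of `u`
over the conjugacy class of `g`. -/
def pa (u : MonoidAlgebra ℤ G) (g : G) : ℤ :=
  Finsupp.sum u.coeff fun x a => if IsConj g x then a else 0

/-- The Zassenhaus Conjecture holds for `H`: every torsion unit of `ℤH` of
augmentation `1` is rationally conjugate to a group element. -/
def ZC (H : Type*) [Group H] : Prop :=
  ∀ u : (MonoidAlgebra ℤ H)ˣ, IsOfFinOrder u → aug (u : MonoidAlgebra ℤ H) = 1 →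
    ∃ h : H, RatConj (u : MonoidAlgebra ℤ H) h

/-- The Zassenhaus Conjecture holds for every proper quotient of `H`. -/
def ZCProperQuotients (H : Type*) [Group H] : Prop :=
  ∀ (M : Subgroup H) [M.Normal], M ≠ ⊥ → ZC (H ⧸ M)

/-- `ω_D(u) = 1`: the sum of the coefficients of `u` over each coset `gD`
is `1` for the trivial coset and `0` otherwise.  (For `D` normal this says
exactly that the image of `u` in `ℤ(G/D)` is `1`.) -/
def mapsToOne (D : Subgroup G) (u : MonoidAlgebra ℤ G) : Prop :=
  ∀ g : G, (Finsupp.sum u.coeff fun x a => if g⁻¹ * x ∈ D then a else 0) =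
    if g ∈ D then 1 else 0

/-- A group is Hamiltonian if it is non-abelian and all its subgroups are normal. -/
def IsHamiltonian (H : Type*) [Group H] : Prop :=
  (¬ ∀ a b : H, a * b = b * a) ∧ ∀ K : Subgroup H, K.Normal

/-- Automorphisms of a cyclic group commute. -/
lemma mulAut_comm_of_isCyclic {H : Type*} [Group H] (h : IsCyclic H) (σ τ : MulAut H) :
    σ * τ = τ * σ := by
  obtain ⟨c, hc⟩ := h.exists_generator
  obtain ⟨m, hm⟩ := hc (τ c)
  obtain ⟨k, hk⟩ := hc (σ c)
  ext x
  obtain ⟨n, hn⟩ := hc x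
  subst hn
  simp only [MulAut.mul_apply, map_zpow, ← hm, ← hk, ← zpow_mul]
  ring_nf

open scoped commutatorElement

/-- For `A` normal cyclic with `G/A` nilpotent, `C_G(A)` is a
normal nilpotent subgroup containing `G'`; in particular `(G',A) = 1`. -/
theorem stmt4 {G : Type*} [Group G] [Fintype G]
    (A : Subgroup G) [A.Normal] (hA : IsCyclic ↥A)
    (hnil : Group.IsNilpotent (G ⧸ A)) :
    (Subgroup.centralizer (A : Set G)).Normal ∧
    Group.IsNilpotent ↥(Subgroup.centralizer (A : Set G)) ∧
    commutator G ≤ Subgroup.centralizer (A : Set G) ∧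
    ∀ g ∈ commutator G, ∀ a ∈ A, Commute g a := by
  set C := Subgroup.centralizer (A : Set G) with hC
  -- Normality
  have hnorm : C.Normal := by
    constructor
    intro n hn g
    rw [Subgroup.mem_centralizer_iff] at hn ⊢
    intro a ha
    have ha' : g⁻¹ * a * g ∈ A := by
      have := ‹A.Normal›.conj_mem a ha g⁻¹
      simpa [mul_assoc] using this
    have := hn _ ha'
    have : g * ((g⁻¹ * a * g) * n) * g⁻¹ = g * (n * (g⁻¹ * a * g)) * g⁻¹ := by rw [this]
    calc a * (g * n * g⁻¹) = g * ((g⁻¹ * a * g) * n) * g⁻¹ := by group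
    _ = g * (n * (g⁻¹ * a * g)) * g⁻¹ := this
    _ = (g * n * g⁻¹) * a := by group
  -- G' ≤ C via the conjugation action on A
  have hle : commutator G ≤ C := by
    rw [commutator_def, Subgroup.commutator_le]
    intro g _ h _
    rw [Subgroup.mem_centralizer_iff]
    intro a ha
    have key : MulAut.conjNormal (H := A) ⁅g, h⁆ = 1 := by
      rw [map_commutatorElement]
      exact commutatorElement_eq_one_iff_commute.mpr (mulAut_comm_of_isCyclic hA _ _)
    have := congrArg (fun σ : MulAut A => ((σ ⟨a, ha⟩ : A) : G)) key
    simp only [MulAut.conjNormal_apply, MulAut.one_apply] at this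
    have : ⁅g, h⁆ * a * ⁅g, h⁆⁻¹ = a := this
    calc a * ⁅g, h⁆ = (⁅g, h⁆ * a * ⁅g, h⁆⁻¹) * ⁅g, h⁆ := by rw [this]
    _ = ⁅g, h⁆ * a := by group
  refine ⟨hnorm, ?_, hle, fun g hg a ha => (hle hg a ha).symm⟩
  -- Nilpotency of C
  have hnorm' : C.Normal := hnorm
  let f : C →* G ⧸ A := (QuotientGroup.mk' A).comp C.subtype
  refine @isNilpotent_of_ker_le_center _ _ _ _ f ?_ hnil
  intro x hx
  have hxA : (x : G) ∈ A := by
    simpa [f, QuotientGroup.eq_one_iff] using hx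
  rw [Subgroup.mem_center_iff]
  intro y
  have := y.2  -- y ∈ centralizer A
  rw [Subgroup.mem_centralizer_iff] at this
  exact Subtype.ext (this (x : G) hxA).symm

end ZCPaper
end
end

section
/- Let G be a finite group with a normal cyclic subgroup A such that G/A is nilpotent, and suppose that the Zassenhaus Conjecture holds for every proper quotient of G. Let u be a torsion element of V(ℤG). If x ∈ G does not lie in the centralizer C_G(A), then ε_x(u) ≥ 0. -/
open scoped Classical Pointwise

noncomputable section

namespace ZCPaper

variable {G : Type*} [Group G]

section Aux
variable {H : Type*} [Group H]

/-- The partial augmentation over `ℚ`, as an additive homomorphism. -/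
def paQ (c : H) : MonoidAlgebra ℚ H →+ ℚ :=
  (Finsupp.liftAddHom fun z => if IsConj c z then AddMonoidHom.id ℚ else 0).comp
    MonoidAlgebra.coeffAddEquiv.toAddMonoidHom

lemma paQ_single (c z : H) (r : ℚ) :
    paQ c (MonoidAlgebra.single z r) = if IsConj c z then r else 0 := by
  classical
  show (Finsupp.liftAddHom (fun z => if IsConj c z then AddMonoidHom.id ℚ else 0) :
    (H →₀ ℚ) →+ ℚ) (Finsupp.single z r) = _
  rw [Finsupp.liftAddHom_apply_single]
  split <;> simp

/-- Partial augmentations are "traces": they agree on `ab` and `ba`. -/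
lemma paQ_mul_comm (c : H) (a b : MonoidAlgebra ℚ H) :
    paQ c (a * b) = paQ c (b * a) := by
  rw [MonoidAlgebra.mul_def, MonoidAlgebra.mul_def]
  rw [map_finsuppSum, map_finsuppSum]
  simp only [map_finsuppSum, paQ_single]
  rw [Finsupp.sum_comm]
  refine Finsupp.sum_congr fun t _ => Finsupp.sum_congr fun s _ => ?_
  have hst : IsConj (s * t) (t * s) := isConj_iff.2 ⟨s⁻¹, by group⟩
  have h1 : IsConj c (s * t) ↔ IsConj c (t * s) :=
    ⟨fun h => h.trans hst, fun h => h.trans hst.symm⟩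
  rw [if_congr h1 rfl rfl, mul_comm]

lemma toQ_single (z : H) (n : ℤ) :
    toQ (MonoidAlgebra.single z n) = MonoidAlgebra.single z (n : ℚ) := by
  have : toQ (MonoidAlgebra.single z n) =
      (MonoidAlgebra.singleOneRingHom.comp (Int.castRingHom ℚ) : ℤ →+* MonoidAlgebra ℚ H) n *
        MonoidAlgebra.of ℚ H z := by
    apply MonoidAlgebra.liftNC_single
  rw [this]
  rw [RingHom.comp_apply]
  show MonoidAlgebra.single 1 ((Int.castRingHom ℚ) n) * MonoidAlgebra.single z 1 = _
  rw [MonoidAlgebra.single_mul_single, one_mul, mul_one]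
  rfl

lemma paQ_toQ (c : H) (w : MonoidAlgebra ℤ H) :
    paQ c (toQ w) = ((pa w c : ℤ) : ℚ) := by
  have h1 : toQ w = Finsupp.sum w.coeff fun z n => MonoidAlgebra.single z ((n : ℤ) : ℚ) := by
    conv_lhs => rw [← MonoidAlgebra.sum_coeff_single w]
    rw [map_finsuppSum]
    exact Finsupp.sum_congr fun z _ => toQ_single z _
  rw [h1, map_finsuppSum]
  simp only [paQ_single]
  rw [pa, Finsupp.sum, Finsupp.sum, Int.cast_sum]
  refine Finset.sum_congr rfl fun z _ => ?_
  split <;> simp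

lemma paQ_of (c h : H) :
    paQ c (MonoidAlgebra.of ℚ H h) = if IsConj c h then 1 else 0 := by
  rw [MonoidAlgebra.of_apply]
  exact paQ_single c h 1

/-- If `w` is rationally conjugate to a group element, then all of its
partial augmentations are non-negative. -/
lemma pa_nonneg_of_ratConj {w : MonoidAlgebra ℤ H} {h : H} (hr : RatConj w h) (c : H) :
    0 ≤ pa w c := by
  obtain ⟨v, hv⟩ := hr
  have h1 : toQ w =
      (v : MonoidAlgebra ℚ H) * (MonoidAlgebra.of ℚ H h * (↑v⁻¹ : MonoidAlgebra ℚ H)) := by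
    rw [← hv]
    simp only [← mul_assoc]
    rw [Units.mul_inv, one_mul, mul_assoc, Units.mul_inv, mul_one]
  have h2 : paQ c (toQ w) = paQ c (MonoidAlgebra.of ℚ H h) := by
    rw [h1, paQ_mul_comm, mul_assoc, Units.inv_mul, mul_one]
  rw [paQ_toQ, paQ_of] at h2
  have : (0 : ℚ) ≤ ((pa w c : ℤ) : ℚ) := by rw [h2]; split <;> norm_num
  exact_mod_cast this

lemma aug_mapDomain {H' : Type*} [Group H'] (f : H → H') (w : MonoidAlgebra ℤ H) :
    aug (MonoidAlgebra.ofCoeff (Finsupp.mapDomain f w.coeff)) = aug w := by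
  unfold aug
  exact Finsupp.sum_mapDomain_index (fun _ => rfl) (fun _ _ _ => rfl)

lemma pa_mapDomain {H' : Type*} [Group H'] (f : H →* H') (w : MonoidAlgebra ℤ H) (x : H)
    (hiff : ∀ g : H, IsConj (f x) (f g) ↔ IsConj x g) :
    pa (MonoidAlgebra.ofCoeff (Finsupp.mapDomain f w.coeff)) (f x) = pa w x := by
  unfold pa
  rw [MonoidAlgebra.coeff_ofCoeff]
  rw [Finsupp.sum_mapDomain_index (fun _ => by simp) (fun b m₁ m₂ => by split <;> simp)]
  exact Finsupp.sum_congr fun g _ => by rw [if_congr (hiff g) rfl rfl]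

/-- The key group-theoretic construction: if `A` is a cyclic normal subgroup of the
finite group `G` and `x` does not centralize `A`, then there is a nontrivial normal
subgroup `N` of `G` (namely `[x, A]`, which is a subgroup of `A`, characteristic in
the cyclic group `A` by a counting argument) such that every element of the coset
`xN` is conjugate to `x`. -/
lemma exists_normal_conj {G : Type*} [Group G] [Fintype G]
    (A : Subgroup G) [A.Normal] (hA : IsCyclic ↥A)
    (x : G) (hx : x ∉ Subgroup.centralizer (A : Set G)) :
    ∃ N : Subgroup G, N.Normal ∧ N ≠ ⊥ ∧ ∀ m ∈ N, IsConj x (x * m) := by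
  classical
  -- A is commutative
  have habel : ∀ a b : G, a ∈ A → b ∈ A → a * b = b * a := by
    obtain ⟨gen, hgen⟩ := hA
    intro a b ha hb
    obtain ⟨m, hm⟩ := Subgroup.mem_zpowers_iff.mp (hgen ⟨a, ha⟩)
    obtain ⟨n, hn⟩ := Subgroup.mem_zpowers_iff.mp (hgen ⟨b, hb⟩)
    have : (⟨a, ha⟩ : ↥A) * ⟨b, hb⟩ = ⟨b, hb⟩ * ⟨a, ha⟩ := by
      rw [← hm, ← hn, ← zpow_add, ← zpow_add, add_comm]
    exact congrArg Subtype.val this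
  have hconjA : ∀ c : G, c ∈ A → x⁻¹ * c⁻¹ * x ∈ A := by
    intro c hc
    have := (inferInstance : A.Normal).conj_mem c⁻¹ (A.inv_mem hc) x⁻¹
    simpa [mul_assoc] using this
  -- the homomorphism a ↦ [x, a]
  set φ : ↥A →* G := MonoidHom.mk' (fun a => x⁻¹ * (a : G)⁻¹ * x * (a : G)) (by
    intro a b
    have h1 : (x⁻¹ * (b : G)⁻¹ * x) ∈ A := hconjA _ b.2
    have h2 : (x⁻¹ * (a : G)⁻¹ * x) * (a : G) ∈ A := A.mul_mem (hconjA _ a.2) a.2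
    push_cast
    calc x⁻¹ * ((a : G) * (b : G))⁻¹ * x * ((a : G) * (b : G))
        = (x⁻¹ * (b : G)⁻¹ * x) * ((x⁻¹ * (a : G)⁻¹ * x) * (a : G)) * (b : G) := by group
      _ = ((x⁻¹ * (a : G)⁻¹ * x) * (a : G)) * (x⁻¹ * (b : G)⁻¹ * x) * (b : G) := by
          rw [habel _ _ h1 h2]
      _ = x⁻¹ * (a : G)⁻¹ * x * (a : G) * (x⁻¹ * (b : G)⁻¹ * x * (b : G)) := by group) with hφ
  have hrangeA : φ.range ≤ A := by
    rintro _ ⟨a, rfl⟩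
    exact A.mul_mem (hconjA _ a.2) a.2
  -- a nontrivial element of the range
  rw [Subgroup.mem_centralizer_iff] at hx
  push_neg at hx
  obtain ⟨a₀, ha₀A, ha₀⟩ := hx
  have hne : φ ⟨a₀, ha₀A⟩ ≠ 1 := by
    intro h
    apply ha₀
    have : x⁻¹ * a₀⁻¹ * x * a₀ = 1 := h
    have h2 : a₀⁻¹ * x * a₀ = x := by
      have := congrArg (fun t => x * t) this
      simpa [mul_assoc] using this
    calc a₀ * x = a₀ * (a₀⁻¹ * x * a₀) := by rw [h2]
      _ = x * a₀ := by group
  set k := Nat.card ↥φ.range with hk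
  have hk0 : 0 < k := Nat.card_pos
  have hpowk : ∀ y ∈ φ.range, y ^ k = 1 := by
    intro y hy
    have := pow_card_eq_one' (G := ↥φ.range) (x := ⟨y, hy⟩)
    have := congrArg (Subtype.val) this
    simpa [hk, Nat.card_eq_fintype_card] using this
  -- N = {y ∈ A | y ^ k = 1}, a normal subgroup of G
  set N : Subgroup G :=
    { carrier := {y | y ∈ A ∧ y ^ k = 1}
      one_mem' := ⟨A.one_mem, one_pow k⟩
      mul_mem' := by
        rintro a b ⟨haA, hak⟩ ⟨hbA, hbk⟩
        refine ⟨A.mul_mem haA hbA, ?_⟩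
        have hc : Commute a b := habel a b haA hbA
        rw [hc.mul_pow, hak, hbk, one_mul]
      inv_mem' := by
        rintro a ⟨haA, hak⟩
        exact ⟨A.inv_mem haA, by rw [inv_pow, hak, inv_one]⟩ } with hN
  have hNnormal : N.Normal := by
    constructor
    rintro n ⟨hnA, hnk⟩ g
    refine ⟨(inferInstance : A.Normal).conj_mem n hnA g, ?_⟩
    rw [conj_pow, hnk, mul_one, mul_inv_cancel]
  -- N is nontrivial
  have hNbot : N ≠ ⊥ := by
    intro hbot
    have hmem : φ ⟨a₀, ha₀A⟩ ∈ N := by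
      refine ⟨hrangeA ⟨_, rfl⟩, hpowk _ ⟨_, rfl⟩⟩
    rw [hbot, Subgroup.mem_bot] at hmem
    exact hne hmem
  -- N ≤ range φ  (counting in the cyclic group A)
  have hNrange : ∀ y ∈ N, ∃ a : ↥A, φ a = y := by
    haveI : IsCyclic ↥A := hA
    intro y hy
    set S : Finset ↥A := Finset.univ.filter (fun a : ↥A => a ^ k = 1) with hS
    have hScard : S.card ≤ k := by
      simpa [hS] using IsCyclic.card_pow_eq_one_le (α := ↥A) hk0
    set e : ↥φ.range → ↥A := fun m => ⟨(m : G), hrangeA m.2⟩ with he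
    have hinj : Function.Injective e := by
      intro m₁ m₂ h
      have h' : ((e m₁ : ↥A) : G) = ((e m₂ : ↥A) : G) := congrArg (fun t : ↥A => (t : G)) h
      exact Subtype.ext h'
    set T : Finset ↥A := Finset.univ.image e with hT
    have hTS : T ⊆ S := by
      intro a ha
      rw [hT, Finset.mem_image] at ha
      obtain ⟨m, _, rfl⟩ := ha
      rw [hS, Finset.mem_filter]
      refine ⟨Finset.mem_univ _, ?_⟩
      apply Subtype.ext
      have : ((m : G)) ^ k = 1 := hpowk _ m.2
      simpa [he] using this
    have hTcard : T.card = k := by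
      rw [hT, Finset.card_image_of_injective _ hinj, Finset.card_univ, hk,
        Nat.card_eq_fintype_card]
    have hTeqS : T = S := Finset.eq_of_subset_of_card_le hTS (by rw [hTcard]; exact hScard)
    have hyS : (⟨y, hy.1⟩ : ↥A) ∈ S := by
      rw [hS, Finset.mem_filter]
      exact ⟨Finset.mem_univ _, Subtype.ext (by simpa using hy.2)⟩
    rw [← hTeqS, hT, Finset.mem_image] at hyS
    obtain ⟨m, _, hm⟩ := hyS
    obtain ⟨a, ha⟩ := m.2
    exact ⟨a, by rw [ha]; exact congrArg Subtype.val hm⟩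
  refine ⟨N, hNnormal, hNbot, ?_⟩
  intro m hm
  obtain ⟨a, ha⟩ := hNrange m hm
  have : x * m = (a : G)⁻¹ * x * (a : G) := by
    rw [← ha]
    show x * (x⁻¹ * (a : G)⁻¹ * x * (a : G)) = _
    group
  rw [this]
  rw [isConj_iff]
  exact ⟨(a : G)⁻¹, by group⟩

end Aux

/-- In a minimal cyclic-by-nilpotent setting, partial augmentations
outside the centralizer of `A` are non-negative. -/
theorem stmt5 {G : Type*} [Group G] [Fintype G]
    (A : Subgroup G) [A.Normal] (hA : IsCyclic ↥A)
    (hnil : Group.IsNilpotent (G ⧸ A))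
    (hquot : ZCProperQuotients G)
    (u : (MonoidAlgebra ℤ G)ˣ) (hu : IsOfFinOrder u)
    (haug : aug (u : MonoidAlgebra ℤ G) = 1)
    (x : G) (hx : x ∉ Subgroup.centralizer (A : Set G)) :
    0 ≤ pa (u : MonoidAlgebra ℤ G) x := by
  classical
  obtain ⟨N, hNnormal, hNbot, hkey⟩ := exists_normal_conj A hA x hx
  haveI := hNnormal
  set π : G →* G ⧸ N := QuotientGroup.mk' N with hπ
  set Φ : MonoidAlgebra ℤ G →+* MonoidAlgebra ℤ (G ⧸ N) :=
    MonoidAlgebra.mapDomainRingHom ℤ π with hΦ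
  set w : (MonoidAlgebra ℤ (G ⧸ N))ˣ := Units.map Φ.toMonoidHom u with hw
  have hcoe : (w : MonoidAlgebra ℤ (G ⧸ N)) = MonoidAlgebra.ofCoeff (Finsupp.mapDomain π (u : MonoidAlgebra ℤ G).coeff) := rfl
  have hord : IsOfFinOrder w := (Units.map Φ.toMonoidHom).isOfFinOrder hu
  have haug' : aug (w : MonoidAlgebra ℤ (G ⧸ N)) = 1 := by
    rw [hcoe, aug_mapDomain, haug]
  obtain ⟨h, hconj⟩ := hquot N hNbot w hord haug'
  have hiff : ∀ g : G, IsConj (π x) (π g) ↔ IsConj x g := by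
    intro g
    constructor
    · intro hc
      rw [isConj_iff] at hc
      obtain ⟨z, hz⟩ := hc
      obtain ⟨y, rfl⟩ := QuotientGroup.mk'_surjective N z
      have hπyx : π (y * x * y⁻¹) = π g := by
        rw [map_mul, map_mul, map_inv]; exact hz
      rw [hπ] at hπyx
      obtain ⟨m, hm, hmg⟩ := (QuotientGroup.mk'_eq_mk' N).mp hπyx
      have hm' : y⁻¹ * m * y ∈ N := by
        have := hNnormal.conj_mem m hm y⁻¹
        simpa using this
      have hg : g = y * (x * (y⁻¹ * m * y)) * y⁻¹ := by
        rw [← hmg]; group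
      rw [hg]
      exact (hkey _ hm').trans (isConj_iff.2 ⟨y, rfl⟩)
    · exact fun hc => π.map_isConj hc
  have h0 : 0 ≤ pa (w : MonoidAlgebra ℤ (G ⧸ N)) (π x) := pa_nonneg_of_ratConj hconj (π x)
  have h1 : pa (w : MonoidAlgebra ℤ (G ⧸ N)) (π x) = pa (u : MonoidAlgebra ℤ G) x := by
    rw [hcoe]; exact pa_mapDomain π _ x hiff
  rw [← h1]; exact h0

end ZCPaper
end
end

section
/- Let G be a finite group with a normal cyclic subgroup A such that G/A is nilpotent and such that |A| is coprime to the index [G:A] (i.e. A is a Hall subgroup of G). Then C_G(A) = C_G(Soc(A)), where Soc(A) is the subgroup of A generated by the elements of A of prime order. -/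
open scoped Classical Pointwise

noncomputable section

namespace ZCPaper

variable {G : Type*} [Group G]

private lemma binom (t : ℤ) : ∀ k : ℕ, t ^ 2 ∣ (1 + t) ^ k - (1 + k * t)
  | 0 => by simp
  | (k+1) => by
    have ih := binom t k
    have h : (1+t)^(k+1) - (1+((k+1:ℕ):ℤ)*t) = (1+t)*((1+t)^k - (1+(k:ℤ)*t)) + k * t^2 := by
      push_cast; ring
    rw [h]
    exact dvd_add (ih.mul_left _) (dvd_mul_left _ _)

private lemma step {p k j : ℕ} (hp : p.Prime) (hco : Nat.Coprime p k) (hj : 1 ≤ j)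
    {r : ℤ} (h1 : (p:ℤ)^j ∣ r - 1) (h2 : (p:ℤ)^(j+1) ∣ r^k - 1) :
    (p:ℤ)^(j+1) ∣ r - 1 := by
  have hb : (r-1)^2 ∣ r ^ k - (1 + k*(r-1)) := by
    have := binom (r-1) k
    simpa using this
  have hsq : (p:ℤ)^(j+1) ∣ (r-1)^2 := by
    calc (p:ℤ)^(j+1) ∣ ((p:ℤ)^j)^2 := by
          rw [← pow_mul]; exact pow_dvd_pow _ (by omega)
      _ ∣ (r-1)^2 := pow_dvd_pow_of_dvd h1 2
  have hkt : (p:ℤ)^(j+1) ∣ (k:ℤ) * (r - 1) := by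
    have h3 : (p:ℤ)^(j+1) ∣ r ^ k - (1 + k*(r-1)) := hsq.trans hb
    have : (k:ℤ) * (r-1) = (r^k - 1) - (r^k - (1 + k*(r-1))) := by ring
    rw [this]; exact dvd_sub h2 h3
  have hcop : IsCoprime ((p:ℤ)^(j+1)) (k:ℤ) := by
    have : IsCoprime (p:ℤ) (k:ℤ) := Int.isCoprime_iff_gcd_eq_one.mpr hco
    exact this.pow_left
  exact hcop.dvd_of_dvd_mul_left hkt

private lemma key {n k : ℕ} {r : ℤ} (hn : n ≠ 0) (hk : k ≠ 0) (hco : Nat.Coprime n k)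
    (h1 : ∀ p : ℕ, p.Prime → p ∣ n → (p:ℤ) ∣ r - 1)
    (h2 : (n:ℤ) ∣ r^k - 1) : (n:ℤ) ∣ r - 1 := by
  rcases eq_or_ne (r - 1) 0 with h|h
  · simp [h]
  · have hppow : ∀ p : ℕ, p.Prime → p ∣ n → (p:ℤ)^(n.factorization p) ∣ r - 1 := by
      intro p hp hpn
      set e := n.factorization p with he
      have hce : ∀ j, j ≤ e → (p:ℤ)^j ∣ r - 1 := by
        intro j
        induction j with
        | zero => intro _; simp
        | succ j ih =>
          intro hje
          have hdl : (p:ℤ)^(j+1) ∣ r^k - 1 := by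
            have : (p:ℤ)^(j+1) ∣ (n:ℤ) := by
              have : p^(j+1) ∣ n := by
                calc p^(j+1) ∣ p^e := pow_dvd_pow _ hje
                  _ ∣ n := Nat.ordProj_dvd n p
              exact_mod_cast Int.natCast_dvd_natCast.mpr this
            exact this.trans h2
          rcases Nat.eq_zero_or_pos j with rfl|hj
          · simpa using h1 p hp hpn
          · exact step hp (hco.coprime_dvd_left hpn) hj (ih (by omega)) hdl
      exact hce e le_rfl
    -- combine
    have habs : n ∣ (r-1).natAbs := by
      have hm0 : (r-1).natAbs ≠ 0 := by simpa using h
      rw [← Nat.factorization_le_iff_dvd hn hm0, Finsupp.le_def]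
      intro p
      rcases eq_or_ne (n.factorization p) 0 with h0|h0
      · simp [h0]
      · have hp : p.Prime := by
          by_contra hnp
          exact h0 (Nat.factorization_eq_zero_of_not_prime n hnp)
        have hpn : p ∣ n := Nat.dvd_of_factorization_pos h0
        have := hppow p hp hpn
        have : p ^ (n.factorization p) ∣ (r-1).natAbs := by
          rw [← Int.natCast_dvd]
          exact_mod_cast this
        exact (Nat.Prime.pow_dvd_iff_le_factorization hp hm0).mp this
    exact Int.dvd_natAbs.mp (Int.natCast_dvd_natCast.mpr habs)

/-- If `A` is a cyclic normal Hall subgroup with `G/A` nilpotent,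
then `C_G(A) = C_G(Soc(A))`, where `Soc(A)` is generated by the elements of `A`
of prime order. -/
theorem stmt8 {G : Type*} [Group G] [Fintype G]
    (A : Subgroup G) [A.Normal] (hA : IsCyclic ↥A)
    (hnil : Group.IsNilpotent (G ⧸ A))
    (hHall : Nat.Coprime (Nat.card ↥A) A.index) :
    Subgroup.centralizer (A : Set G) =
      Subgroup.centralizer
        ((Subgroup.closure {x : G | x ∈ A ∧ ∃ p : ℕ, p.Prime ∧ orderOf x = p} :
          Subgroup G) : Set G) := by
  classical
  set S : Set G := {x : G | x ∈ A ∧ ∃ p : ℕ, p.Prime ∧ orderOf x = p} with hS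
  apply le_antisymm
  · apply Subgroup.centralizer_le
    have : Subgroup.closure S ≤ A := (Subgroup.closure_le A).mpr (fun x hx => hx.1)
    exact this
  · intro g hg
    rw [Subgroup.mem_centralizer_iff] at hg ⊢
    obtain ⟨a, ha⟩ := hA.exists_generator
    set n := Nat.card ↥A with hn
    have hn0 : n ≠ 0 := Nat.card_pos.ne'
    have horderA : orderOf a = n := by
      exact orderOf_eq_card_of_forall_mem_zpowers ha
    have horder : orderOf (↑a : G) = n := by
      rw [← horderA]
      exact orderOf_injective A.subtype Subtype.coe_injective a
    -- conjugation exponent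
    have hconjA : g * ↑a * g⁻¹ ∈ A := Subgroup.Normal.conj_mem ‹A.Normal› _ a.2 g
    obtain ⟨m, hm⟩ := ha ⟨g * ↑a * g⁻¹, hconjA⟩
    have hmG : g * ↑a * g⁻¹ = (↑a : G) ^ m := by
      have := congrArg (Subtype.val) hm
      simpa using this.symm
    have conj_zpow : ∀ s : ℤ, g * (↑a:G)^s * g⁻¹ = (g * ↑a * g⁻¹)^s := fun s => by
      simpa [MulAut.conj_apply] using (map_zpow (MulAut.conj g) (↑a : G) s)
    -- socle condition
    have hp1 : ∀ p : ℕ, p.Prime → p ∣ n → (p:ℤ) ∣ m - 1 := by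
      intro p hp hpn
      set s : G := (↑a:G) ^ (n / p) with hs_def
      have hsA : s ∈ A := by
        rw [hs_def]
        exact A.pow_mem a.2 _
      have hnp0 : n / p ≠ 0 := Nat.div_ne_zero_iff_of_dvd hpn |>.mpr ⟨hn0, hp.ne_zero⟩
      have hords : orderOf s = p := by
        rw [hs_def, orderOf_pow, horder, Nat.gcd_eq_right (Nat.div_dvd_of_dvd hpn),
          Nat.div_div_self hpn hn0]
      have hsmem : s ∈ (Subgroup.closure S : Set G) :=
        Subgroup.subset_closure ⟨hsA, p, hp, hords⟩
      have hcomm : g * s * g⁻¹ = s := by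
        have := hg s hsmem
        rw [← this]; group
      have hz : (↑a:G) ^ ((m - 1) * ((n/p : ℕ) : ℤ)) = 1 := by
        have h1 : g * (↑a:G)^((n/p : ℕ) : ℤ) * g⁻¹ = (↑a:G) ^ (m * ((n/p : ℕ) : ℤ)) := by
          rw [conj_zpow, hmG, ← zpow_mul]
        have h2 : (↑a:G) ^ (m * ((n/p : ℕ):ℤ)) = (↑a:G) ^ ((n/p : ℕ):ℤ) := by
          rw [← h1]
          have : (↑a:G) ^ ((n/p : ℕ):ℤ) = s := by rw [hs_def, zpow_natCast]
          rw [this, hcomm]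
        rw [sub_mul, one_mul, zpow_sub, h2]
        simp
      have hdvd : (n:ℤ) ∣ (m - 1) * ((n/p : ℕ):ℤ) := by
        rw [← horder] at hz ⊢
        exact orderOf_dvd_iff_zpow_eq_one.mpr hz
      have hfac : (n:ℤ) = (p:ℤ) * ((n/p:ℕ):ℤ) := by
        exact_mod_cast congrArg (Nat.cast : ℕ → ℤ) (Nat.mul_div_cancel' hpn).symm
      rw [hfac] at hdvd
      have hq0 : ((n/p:ℕ):ℤ) ≠ 0 := Int.natCast_ne_zero.mpr hnp0
      exact (mul_dvd_mul_iff_right hq0).mp hdvd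
    -- index condition
    set k := A.index with hk
    have hk0 : k ≠ 0 := Subgroup.index_ne_zero_of_finite
    have hgk : g ^ k ∈ A := Subgroup.pow_index_mem A g
    have hiter : ∀ j : ℕ, g^j * ↑a * (g^j)⁻¹ = (↑a:G) ^ (m ^ j) := by
      intro j
      induction j with
      | zero => simp
      | succ j ih =>
        have hstep : g^(j+1) * ↑a * (g^(j+1))⁻¹ = g * (g^j * ↑a * (g^j)⁻¹) * g⁻¹ := by
          group
        rw [hstep, ih, conj_zpow, hmG, ← zpow_mul, pow_succ, mul_comm]
    have h2 : (n:ℤ) ∣ m ^ k - 1 := by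
      have hcommk : g^k * ↑a * (g^k)⁻¹ = ↑a := by
        obtain ⟨t, ht⟩ := ha ⟨g ^ k, hgk⟩
        have htG : g ^ k = (↑a:G) ^ t := by
          have := congrArg (Subtype.val) ht
          simpa using this.symm
        rw [htG]
        group
      have : (↑a:G) ^ (m ^ k) = ↑a := by rw [← hiter k, hcommk]
      have hz : (↑a:G) ^ (m ^ k - 1) = 1 := by
        rw [zpow_sub, this]; simp
      rw [← horder]
      exact orderOf_dvd_iff_zpow_eq_one.mpr hz
    have hmn : (n:ℤ) ∣ m - 1 := key hn0 hk0 hHall hp1 h2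
    have haconj : g * ↑a * g⁻¹ = ↑a := by
      have hz : (↑a:G) ^ (m - 1) = 1 := by
        rw [← horder]  at hmn
        exact orderOf_dvd_iff_zpow_eq_one.mp hmn
      rw [hmG]
      have : m = (m - 1) + 1 := by ring
      rw [this, zpow_add, hz, one_mul, zpow_one]
    have hca : Commute g ↑a := by
      have : g * ↑a = ↑a * g := by
        have := congrArg (· * g) haconj
        simpa [mul_assoc] using this
      exact this
    intro x hx
    obtain ⟨t, ht⟩ := ha ⟨x, hx⟩
    have hxG : x = (↑a:G) ^ t := by
      have := congrArg (Subtype.val) ht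
      simpa using this.symm
    rw [hxG]
    exact ((hca.zpow_right t)).symm.eq

end ZCPaper
end
end

section
/- Let G be a finite group with a normal cyclic subgroup A such that G/A is nilpotent and such that |A| is coprime to the index [G:A] (i.e. A is a Hall subgroup of G). If p is a prime such that the center Z(G) contains no element of order p, then the Sylow p-subgroups of G are abelian. -/
open scoped Classical Pointwise
open scoped commutatorElement

noncomputable section

namespace ZCPaper

variable {G : Type*} [Group G]

/-- Any two automorphisms of a cyclic group commute. -/
theorem cyclic_mulAut_comm {A : Type*} [Group A] [IsCyclic A] (σ τ : MulAut A) :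
    σ * τ = τ * σ := by
  obtain ⟨g, hg⟩ := IsCyclic.exists_generator (α := A)
  ext a
  obtain ⟨m, rfl⟩ := hg a
  obtain ⟨k, hk⟩ := hg (σ g)
  obtain ⟨l, hl⟩ := hg (τ g)
  simp only [MulAut.mul_apply, map_zpow, ← hk, ← hl, ← zpow_mul]
  rw [mul_comm k l]

/-- Commutators act trivially on a cyclic normal subgroup. -/
theorem commutator_centralizes {G : Type*} [Group G] (A : Subgroup G) [A.Normal]
    (hA : IsCyclic ↥A) (g₁ g₂ : G) {a : G} (ha : a ∈ A) :
    ⁅g₁, g₂⁆ * a * ⁅g₁, g₂⁆⁻¹ = a := by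
  haveI := hA
  have h : MulAut.conjNormal (H := A) ⁅g₁, g₂⁆ = 1 := by
    rw [map_commutatorElement]
    exact commutatorElement_eq_one_iff_commute.mpr (cyclic_mulAut_comm _ _)
  have h2 := congrArg (fun f : MulAut ↥A => ((f ⟨a, ha⟩ : ↥A) : G)) h
  simpa [MulAut.conjNormal_apply, -map_commutatorElement] using h2

/-- If `A` is a cyclic normal Hall subgroup with `G/A` nilpotent
and the center of `G` has no element of order `p`, then the Sylow `p`-subgroups
of `G` are abelian. -/
theorem stmt9 {G : Type*} [Group G] [Fintype G]
    (A : Subgroup G) [A.Normal] (hA : IsCyclic ↥A)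
    (hnil : Group.IsNilpotent (G ⧸ A))
    (hHall : Nat.Coprime (Nat.card ↥A) A.index)
    (p : ℕ) (hp : p.Prime)
    (hZ : ∀ z ∈ Subgroup.center G, orderOf z ≠ p) :
    ∀ P : Sylow p G, ∀ x y : ↥(P : Subgroup G), x * y = y * x := by
  haveI : Fact p.Prime := ⟨hp⟩
  have main : ∃ P₀ : Sylow p G, ∀ u v : G, u ∈ P₀ → v ∈ P₀ → u * v = v * u := by
    by_cases hpa : p ∣ Nat.card ↥A
    · -- Case 1 : `p` divides `|A|`; then the Sylow `p`-subgroups lie in `A`, hence are abelian.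
      obtain ⟨P₀⟩ : Nonempty (Sylow p G) := inferInstance
      refine ⟨P₀, ?_⟩
      have hPA : (P₀ : Subgroup G) ≤ A := by
        intro u hu
        have himg : IsPGroup p ((P₀ : Subgroup G).map (QuotientGroup.mk' A)) :=
          P₀.isPGroup'.map _
        obtain ⟨n, hn⟩ := IsPGroup.iff_card.mp himg
        have hdvd : Nat.card ((P₀ : Subgroup G).map (QuotientGroup.mk' A)) ∣ A.index :=
          Subgroup.card_subgroup_dvd_card _
        have hn0 : n = 0 := by
          by_contra hne
          have hpI : p ∣ A.index := dvd_trans (dvd_pow_self p hne) (hn ▸ hdvd)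
          exact hp.one_lt.ne' (Nat.eq_one_of_dvd_coprimes hHall hpa hpI)
        have hbot : (P₀ : Subgroup G).map (QuotientGroup.mk' A) = ⊥ := by
          rw [← Subgroup.card_eq_one, hn, hn0, pow_zero]
        have : QuotientGroup.mk' A u = 1 := by
          have : QuotientGroup.mk' A u ∈ (P₀ : Subgroup G).map (QuotientGroup.mk' A) :=
            Subgroup.mem_map_of_mem _ hu
          rwa [hbot, Subgroup.mem_bot] at this
        rwa [← QuotientGroup.ker_mk' A, MonoidHom.mem_ker]
      intro u v hu hv
      letI := hA.commGroup
      have h := mul_comm (⟨u, hPA hu⟩ : ↥A) ⟨v, hPA hv⟩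
      exact congrArg Subtype.val h
    · -- Case 2 : `p` does not divide `|A|`.
      obtain ⟨Hsub, hcomp⟩ := Subgroup.exists_right_complement'_of_coprime hHall
      -- `Hsub` is isomorphic to `G ⧸ A`, hence nilpotent.
      have hker : ((QuotientGroup.mk' A).comp Hsub.subtype).ker = ⊥ := by
        rw [eq_bot_iff]
        intro x hx
        have hxA : (x : G) ∈ A := by
          simpa [MonoidHom.mem_ker, QuotientGroup.eq_one_iff] using hx
        have hx1 : (x : G) = 1 := Subgroup.disjoint_def.mp hcomp.disjoint hxA x.2
        simpa [Subgroup.mem_bot] using Subtype.ext hx1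
      haveI hnilH : Group.IsNilpotent ↥Hsub :=
        haveI := hnil; isNilpotent_of_ker_le_center _ (by rw [hker]; exact bot_le)
      -- A Sylow `p`-subgroup of `Hsub` is a Sylow `p`-subgroup of `G`.
      obtain ⟨Q⟩ : Nonempty (Sylow p ↥Hsub) := inferInstance
      have hQmap : IsPGroup p ((Q : Subgroup ↥Hsub).map Hsub.subtype) := Q.isPGroup'.map _
      obtain ⟨P₀, hQP₀⟩ := hQmap.exists_le_sylow
      have hfact : (Nat.card G).factorization p = (Nat.card ↥Hsub).factorization p := by
        have h1 : Nat.card ↥A * A.index = Nat.card G := A.card_mul_index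
        have h2 : A.index = Nat.card ↥Hsub := hcomp.symm.index_eq_card
        have hA0 : Nat.card ↥A ≠ 0 := Nat.card_pos.ne'
        have hI0 : A.index ≠ 0 := Subgroup.index_ne_zero_of_finite
        rw [← h1, Nat.factorization_mul hA0 hI0, Finsupp.add_apply,
          Nat.factorization_eq_zero_of_not_dvd hpa, zero_add, h2]
      have hcards : Nat.card ((Q : Subgroup ↥Hsub).map Hsub.subtype) = Nat.card ↥(P₀ : Subgroup G) := by
        rw [P₀.card_eq_multiplicity, hfact, ← Q.card_eq_multiplicity]
        exact (Nat.card_congr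
          (Subgroup.equivMapOfInjective _ Hsub.subtype Hsub.subtype_injective).toEquiv).symm
      have hEq : (Q : Subgroup ↥Hsub).map Hsub.subtype = (P₀ : Subgroup G) :=
        Subgroup.eq_of_le_of_card_ge hQP₀ (le_of_eq hcards.symm)
      have hPH : (P₀ : Subgroup G) ≤ Hsub := by
        rw [← hEq]; exact Subgroup.map_subtype_le _
      refine ⟨P₀, fun u v hu hv => ?_⟩
      by_contra hne
      -- the nontrivial commutator
      set Psub : Subgroup G := (P₀ : Subgroup G) with hPsub
      have hcmem : ⁅u, v⁆ ∈ Psub := by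
        rw [commutatorElement_def]
        exact Subgroup.mul_mem _ (Subgroup.mul_mem _ (Subgroup.mul_mem _ hu hv)
          (Subgroup.inv_mem _ hu)) (Subgroup.inv_mem _ hv)
      have hcne : ⁅u, v⁆ ≠ 1 := fun h => hne (commutatorElement_eq_one_iff_commute.mp h)
      have hccent : ⁅u, v⁆ ∈ Subgroup.centralizer (A : Set G) := by
        rw [Subgroup.mem_centralizer_iff]
        intro a ha
        have hcc := commutator_centralizes A hA u v ha
        calc a * ⁅u, v⁆ = (⁅u, v⁆ * a * ⁅u, v⁆⁻¹) * ⁅u, v⁆ := by rw [hcc]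
        _ = ⁅u, v⁆ * a := by group
      -- the subgroup of `P₀` centralizing `A`, normal in `P₀`
      set N : Subgroup ↥Psub := (Subgroup.centralizer (A : Set G)).subgroupOf Psub with hN
      haveI hNnorm : N.Normal := by
        constructor
        intro n hn g
        rw [hN, Subgroup.mem_subgroupOf, Subgroup.mem_centralizer_iff] at hn ⊢
        intro a ha
        have hb : (g : G)⁻¹ * a * g ∈ A := by
          have := ‹A.Normal›.conj_mem a ha (g : G)⁻¹
          simpa using this
        have hnb := hn _ hb
        push_cast
        have key : a * ((g : G) * n * (g : G)⁻¹) =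
            (g : G) * (((g : G)⁻¹ * a * g) * n) * (g : G)⁻¹ := by group
        rw [key, hnb]
        group
      have hPp : IsPGroup p ↥Psub := P₀.isPGroup'
      have hNp : IsPGroup p ↥N := hPp.to_subgroup N
      haveI hNnt : Nontrivial ↥N := by
        refine ⟨⟨⟨⟨⁅u, v⁆, hcmem⟩, ?_⟩, 1, ?_⟩⟩
        · rw [hN, Subgroup.mem_subgroupOf]; exact hccent
        · intro h
          apply hcne
          have := congrArg (fun x : ↥N => ((x : ↥Psub) : G)) h
          simpa using this
      have hpN : p ∣ Nat.card ↥N := by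
        obtain ⟨k, hk0, hk⟩ := hNp.nontrivial_iff_card.mp hNnt
        exact hk ▸ dvd_pow_self p hk0.ne'
      -- fixed-point argument : a nontrivial element of `N` centralized by `P₀`
      have hPP : IsPGroup p (ConjAct ↥Psub) := hPp.of_equiv ConjAct.toConjAct
      have hone : (1 : ↥N) ∈ MulAction.fixedPoints (ConjAct ↥Psub) ↥N := by
        intro g
        apply Subtype.ext
        apply Subtype.ext
        show ((g • (1 : ↥N) : ↥N) : ↥Psub).val = _
        rw [ConjAct.Subgroup.val_conj_smul]
        simp [ConjAct.smul_def]
      obtain ⟨b, hbfix, hbne⟩ := hPP.exists_fixed_point_of_prime_dvd_card_of_fixed_point (α := ↥N) hpN hone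
      set z : G := (((b : ↥N) : ↥Psub) : G) with hz
      have hzP : z ∈ Psub := ((b : ↥N) : ↥Psub).2
      have hzne : z ≠ 1 := by
        intro h
        apply hbne
        symm
        apply Subtype.ext; apply Subtype.ext
        exact h
      have hzcentA : z ∈ Subgroup.centralizer (A : Set G) :=
        Subgroup.mem_subgroupOf.mp b.2
      have hzcentP : ∀ w : G, w ∈ Psub → w * z = z * w := by
        intro w hw
        have := hbfix (ConjAct.toConjAct (⟨w, hw⟩ : ↥Psub))
        have hval := congrArg (fun x : ↥N => ((x : ↥Psub) : G)) this
        rw [ConjAct.Subgroup.val_conj_smul] at hval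
        have : (⟨w, hw⟩ : ↥Psub) * (b : ↥Psub) * (⟨w, hw⟩ : ↥Psub)⁻¹ = (b : ↥Psub) := by
          apply Subtype.ext
          simpa [ConjAct.smul_def] using hval
        have h2 := congrArg (fun x : ↥Psub => (x : G)) this
        simp only [Subgroup.coe_mul, Subgroup.coe_inv] at h2
        rw [← hz] at h2
        calc w * z = (w * z * w⁻¹) * w := by group
        _ = z * w := by rw [h2]
      -- `z` is centralized by all of `Hsub`
      have hnormalSyl : ∀ (q : ℕ) (_ : Fact q.Prime) (R : Sylow q ↥Hsub),
          (R : Subgroup ↥Hsub).Normal :=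
        ((isNilpotent_of_finite_tfae (G := ↥Hsub)).out 0 3).mp hnilH
      set z' : ↥Hsub := ⟨z, hPH hzP⟩ with hz'
      have hz'Q : z' ∈ (Q : Subgroup ↥Hsub) := by
        have : z ∈ (Q : Subgroup ↥Hsub).map Hsub.subtype := hEq ▸ hzP
        obtain ⟨q, hq, hqz⟩ := this
        have : q = z' := Subtype.ext hqz
        rwa [← this]
      have hQle : (Q : Subgroup ↥Hsub) ≤ Subgroup.centralizer {z'} := by
        intro x hx
        rw [Subgroup.mem_centralizer_iff]
        rintro w rfl
        have hxP : (x : G) ∈ Psub := by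
          rw [← hEq]
          exact ⟨x, hx, rfl⟩
        have := hzcentP _ hxP
        apply Subtype.ext
        push_cast
        calc (z' : G) * x = z * x := rfl
        _ = (x : G) * z := (this).symm
        _ = (x : G) * z' := rfl
      have hCz : Subgroup.centralizer {z'} = (⊤ : Subgroup ↥Hsub) := by
        rw [← Subgroup.index_eq_one]
        by_contra hne1
        obtain ⟨q, hq, hqdvd⟩ := Nat.exists_prime_and_dvd hne1
        haveI : Fact q.Prime := ⟨hq⟩
        rcases eq_or_ne q p with rfl | hqp
        · exact Q.not_dvd_index
            (hqdvd.trans (Subgroup.index_dvd_of_le hQle))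
        · obtain ⟨R⟩ : Nonempty (Sylow q ↥Hsub) := inferInstance
          have hRle : (R : Subgroup ↥Hsub) ≤ Subgroup.centralizer {z'} := by
            intro r hr
            rw [Subgroup.mem_centralizer_iff]
            rintro w rfl
            exact (Subgroup.commute_of_normal_of_disjoint _ _
              (hnormalSyl p ⟨hp⟩ Q) (hnormalSyl q ⟨hq⟩ R)
              (IsPGroup.disjoint_of_ne p q hqp.symm _ _ Q.isPGroup' R.isPGroup')
              z' r hz'Q hr)
          exact R.not_dvd_index (hqdvd.trans (Subgroup.index_dvd_of_le hRle))
      have hzZ : z ∈ Subgroup.center G := by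
        rw [Subgroup.mem_center_iff]
        intro g
        obtain ⟨⟨a, h⟩, hg, -⟩ := hcomp.existsUnique g
        have hha : (h : G) * z = z * h := by
          have hmem : h ∈ Subgroup.centralizer {z'} := hCz ▸ Subgroup.mem_top h
          rw [Subgroup.mem_centralizer_iff] at hmem
          have h3 := congrArg Subtype.val (hmem z' rfl)
          simpa using h3.symm
        have haz : (a : G) * z = z * a := by
          rw [Subgroup.mem_centralizer_iff] at hzcentA
          exact hzcentA _ a.2
        calc g * z = (a : G) * h * z := by rw [← hg]
        _ = (a : G) * (z * h) := by rw [mul_assoc, hha]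
        _ = z * ((a : G) * h) := by rw [← mul_assoc, haz, mul_assoc]
        _ = z * g := by rw [hg]
      -- derive an element of order `p` in the center, contradiction
      obtain ⟨k, hk⟩ := hPp ⟨z, hzP⟩
      have hzpow : z ^ p ^ k = 1 := by
        have := congrArg (fun x : ↥Psub => (x : G)) hk
        simpa using this
      have hordvd : orderOf z ∣ p ^ k := orderOf_dvd_of_pow_eq_one hzpow
      obtain ⟨m, hm, hmz⟩ := (Nat.dvd_prime_pow hp).mp hordvd
      have hm0 : m ≠ 0 := by
        intro h0
        rw [h0, pow_zero] at hmz
        exact hzne (orderOf_eq_one_iff.mp hmz)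
      have hpz : p ∣ orderOf z := hmz ▸ dvd_pow_self p hm0
      have hz0 : orderOf z ≠ 0 := by
        rw [hmz]; exact (pow_ne_zero m hp.ne_zero)
      have hw : orderOf (z ^ (orderOf z / p)) = p := orderOf_pow_orderOf_div hz0 hpz
      exact hZ _ (Subgroup.pow_mem _ hzZ _) hw
  obtain ⟨P₀, hcomm⟩ := main
  intro P x y
  obtain ⟨g, hg⟩ := MulAction.exists_smul_eq G P₀ P
  have hmem : ∀ w : G, w ∈ P → g⁻¹ * w * g ∈ P₀ := by
    intro w hw
    rw [← hg] at hw
    have hw' : w ∈ MulAut.conj g • (P₀ : Subgroup G) := hw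
    rw [Subgroup.mem_pointwise_smul_iff_inv_smul_mem] at hw'
    exact (by simpa [MulAut.smul_def] using hw' : g⁻¹ * w * g ∈ (P₀ : Subgroup G))
  have hx := hmem x x.2
  have hy := hmem y y.2
  have h := hcomm _ _ hx hy
  apply Subtype.ext
  show (x : G) * y = (y : G) * x
  have h1 : (x : G) * y = g * ((g⁻¹ * x * g) * (g⁻¹ * y * g)) * g⁻¹ := by group
  have h2 : (y : G) * x = g * ((g⁻¹ * y * g) * (g⁻¹ * x * g)) * g⁻¹ := by group
  rw [h1, h2, h]

end ZCPaper
end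
end

section
/- Let G be a finite group containing a normal cyclic subgroup A such that G/A is nilpotent, and let N be an abelian normal subgroup of G containing A. Then 𝒦_N = {K ≤ N : K ∩ A = 1, K ∩ Z(G) = 1, and N/K is cyclic}. -/
open scoped Classical Pointwise

noncomputable section

namespace ZCPaper

variable {G : Type*} [Group G]

/-- A nontrivial normal subgroup of a nilpotent group meets the center. -/
lemma normal_meets_center {H : Type*} [Group H] (hnil : Group.IsNilpotent H)
    (M : Subgroup H) (hM : M.Normal) (hMbot : M ≠ ⊥) :
    ∃ x : H, x ∈ M ∧ x ≠ 1 ∧ x ∈ Subgroup.center H := by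
  obtain ⟨n, hn⟩ := hnil
  have hPn : M ⊓ Subgroup.upperCentralSeries H n ≠ ⊥ := by
    rw [hn, inf_top_eq]; exact hMbot
  classical
  have hex : ∃ k, M ⊓ Subgroup.upperCentralSeries H k ≠ ⊥ := ⟨n, hPn⟩
  let k := Nat.find hex
  have hk : M ⊓ Subgroup.upperCentralSeries H k ≠ ⊥ := Nat.find_spec hex
  have hk0 : k ≠ 0 := by
    intro h
    apply hk
    rw [h]
    simp [Subgroup.upperCentralSeries_zero]
  obtain ⟨m, hm⟩ := Nat.exists_eq_succ_of_ne_zero hk0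
  have hprev : M ⊓ Subgroup.upperCentralSeries H m = ⊥ := by
    by_contra hne
    have hle : k ≤ m := Nat.find_le hne
    omega
  obtain ⟨x, hx1⟩ := (Subgroup.ne_bot_iff_exists_ne_one.mp hk)
  obtain ⟨y, hxM, hxU, hy1⟩ : ∃ y : H, y ∈ M ∧ y ∈ Subgroup.upperCentralSeries H k ∧ y ≠ 1 :=
    ⟨x, x.2.1, x.2.2, by simpa using hx1⟩
  refine ⟨y, hxM, hy1, Subgroup.mem_center_iff.mpr fun g => ?_⟩
  have hcomm : y * g * y⁻¹ * g⁻¹ ∈ Subgroup.upperCentralSeries H m := by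
    rw [hm] at hxU
    exact (Subgroup.mem_upperCentralSeries_succ_iff).mp hxU g
  have hcommM : y * g * y⁻¹ * g⁻¹ ∈ M := by
    have h1 : g * y⁻¹ * g⁻¹ ∈ M := hM.conj_mem _ (M.inv_mem hxM) g
    have := M.mul_mem hxM h1
    simpa [mul_assoc] using this
  have : y * g * y⁻¹ * g⁻¹ ∈ (⊥ : Subgroup H) := by
    rw [← hprev]; exact ⟨hcommM, hcomm⟩
  rw [Subgroup.mem_bot] at this
  have h2 : y * g * y⁻¹ = g := by
    have h := congrArg (· * g) this
    simpa [mul_assoc] using h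
  have h3 : y * g = g * y := by
    have h := congrArg (· * y) h2
    simpa [mul_assoc] using h
  exact h3.symm

/-- Any subgroup of a finite cyclic normal subgroup is normal. -/
lemma normal_of_le_cyclic_normal {G : Type*} [Group G] [Fintype G]
    (A : Subgroup G) [A.Normal] (hA : IsCyclic ↥A) (P : Subgroup G) (hPA : P ≤ A) :
    P.Normal := by
  classical
  set n := Nat.card P with hn
  have hn0 : 0 < n := Nat.card_pos
  -- characterization : a ∈ P ↔ a ∈ A ∧ a ^ n = 1
  have hchar : ∀ a : G, a ∈ P ↔ a ∈ A ∧ a ^ n = 1 := by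
    intro a
    constructor
    · intro haP
      refine ⟨hPA haP, ?_⟩
      have : (⟨a, haP⟩ : P) ^ n = 1 := by
        rw [hn]; exact pow_card_eq_one'
      exact congrArg (Subtype.val) this
    · rintro ⟨haA, han⟩
      -- work inside A
      let P' := P.subgroupOf A
      have hcardP' : Nat.card P' = n := by
        rw [hn]
        exact Nat.card_congr (Subgroup.subgroupOfEquivOfLe hPA).toEquiv
      let S : Finset ↥A := Finset.univ.filter fun b : ↥A => b ^ n = 1
      have hsub : (P' : Set ↥A).toFinset ⊆ S := by
        intro b hb
        simp only [Set.mem_toFinset, SetLike.mem_coe] at hb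
        simp only [S, Finset.mem_filter, Finset.mem_univ, true_and]
        have : (⟨b, hb⟩ : P') ^ n = 1 := by
          rw [← hcardP']; exact pow_card_eq_one'
        exact congrArg (Subtype.val) this
      have hScard : S.card ≤ n := hA.card_pow_eq_one_le hn0
      have hPcard : (P' : Set ↥A).toFinset.card = n := by
        rw [Set.toFinset_card, ← Nat.card_eq_fintype_card]
        exact hcardP'
      have heq : (P' : Set ↥A).toFinset = S :=
        Finset.eq_of_subset_of_card_le hsub (by omega)
      have haS : (⟨a, haA⟩ : ↥A) ∈ S := by
        simp only [S, Finset.mem_filter, Finset.mem_univ, true_and]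
        ext
        simpa using han
      rw [← heq, Set.mem_toFinset] at haS
      exact haS
  constructor
  intro a haP g
  rw [hchar] at haP ⊢
  obtain ⟨haA, han⟩ := haP
  refine ⟨‹A.Normal›.conj_mem a haA g, ?_⟩
  rw [conj_pow, han, mul_one, mul_inv_cancel]

/-- Description of the set `𝒦_N`: for `N` an abelian normal
subgroup containing `A`, the subgroups `K ≤ N` with `N/K` cyclic containing no
nontrivial normal subgroup of `G` are exactly those with `K ∩ A = 1`,
`K ∩ Z(G) = 1` and `N/K` cyclic. -/
theorem stmt10 {G : Type*} [Group G] [Fintype G]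
    (A : Subgroup G) [A.Normal] (hA : IsCyclic ↥A)
    (hnil : Group.IsNilpotent (G ⧸ A))
    (N : Subgroup G) [N.Normal] [IsMulCommutative N] (hAN : A ≤ N) :
    {K : Subgroup G | K ≤ N ∧ IsCyclic (↥N ⧸ K.subgroupOf N) ∧
        ∀ M : Subgroup G, M.Normal → M ≤ K → M = ⊥} =
    {K : Subgroup G | K ≤ N ∧ K ⊓ A = ⊥ ∧ K ⊓ Subgroup.center G = ⊥ ∧
        IsCyclic (↥N ⧸ K.subgroupOf N)} := by
  ext K
  simp only [Set.mem_setOf_eq]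
  constructor
  · rintro ⟨hKN, hcyc, hmin⟩
    refine ⟨hKN, ?_, ?_, hcyc⟩
    · exact hmin _ (normal_of_le_cyclic_normal A hA (K ⊓ A) inf_le_right) inf_le_left
    · refine hmin _ ?_ inf_le_left
      constructor
      intro a ha g
      obtain ⟨haK, haZ⟩ := ha
      have haZ' : a ∈ Subgroup.center G := haZ
      have : g * a * g⁻¹ = a := by
        rw [Subgroup.mem_center_iff.mp haZ' g]
        group
      rw [this]
      exact ⟨haK, haZ⟩
  · rintro ⟨hKN, hKA, hKZ, hcyc⟩
    refine ⟨hKN, hcyc, ?_⟩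
    intro M hM hMK
    by_contra hMbot
    have hMA : M ⊓ A = ⊥ := le_bot_iff.mp (hKA ▸ inf_le_inf_right A hMK)
    have hMZ : M ⊓ Subgroup.center G = ⊥ :=
      le_bot_iff.mp (hKZ ▸ inf_le_inf_right (Subgroup.center G) hMK)
    -- map to the quotient
    let π := QuotientGroup.mk' A
    have hπ : Function.Surjective π := QuotientGroup.mk'_surjective A
    let Mb := M.map π
    have hMbnormal : Mb.Normal := Subgroup.Normal.map hM π hπ
    have hMbbot : Mb ≠ ⊥ := by
      intro h
      apply hMbot
      have hle : M ≤ A := by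
        intro m hm
        have : π m ∈ Mb := Subgroup.mem_map_of_mem π hm
        rw [h, Subgroup.mem_bot] at this
        have : m ∈ π.ker := this
        rwa [QuotientGroup.ker_mk'] at this
      rw [← hMA, inf_eq_left.mpr hle]
    obtain ⟨x, hxMb, hx1, hxZ⟩ := normal_meets_center hnil Mb hMbnormal hMbbot
    obtain ⟨m, hmM, hmx⟩ := hxMb
    have hm1 : m ≠ 1 := by
      rintro rfl
      exact hx1 (by simpa using hmx.symm)
    have hmZ : m ∈ Subgroup.center G := by
      rw [Subgroup.mem_center_iff]
      intro g
      have hker : g * m * g⁻¹ * m⁻¹ ∈ A := by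
        have : π (g * m * g⁻¹ * m⁻¹) = 1 := by
          have hc : π g * π m = π m * π g := by
            have h := Subgroup.mem_center_iff.mp hxZ (π g)
            rwa [← hmx] at h
          simp only [map_mul, map_inv]
          rw [hc]
          group
        exact (QuotientGroup.eq_one_iff _).mp this
      have hkerM : g * m * g⁻¹ * m⁻¹ ∈ M := by
        have h1 : g * m * g⁻¹ ∈ M := hM.conj_mem _ hmM g
        have := M.mul_mem h1 (M.inv_mem hmM)
        simpa [mul_assoc] using this
      have : g * m * g⁻¹ * m⁻¹ ∈ (⊥ : Subgroup G) := hMA ▸ ⟨hkerM, hker⟩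
      rw [Subgroup.mem_bot] at this
      have h2 : g * m * g⁻¹ = m := by
        have h := congrArg (· * m) this
        simpa [mul_assoc] using h
      calc g * m = (g * m * g⁻¹) * g := by group
        _ = m * g := by rw [h2]
    have : m ∈ (⊥ : Subgroup G) := hMZ ▸ ⟨hmM, hmZ⟩
    exact hm1 (Subgroup.mem_bot.mp this)

end ZCPaper
end
end

section
/- Let G be a finite group, K a subgroup of G, and g, h ∈ G. Set X_{K,g,h} = {t ∈ G : t⁻¹gt ∈ hK} and, for x ∈ G, set Y_{K,g,x} = {k ∈ K : k = (x⁻¹gx)⁻¹·w⁻¹·(x⁻¹gx)·w for some w of the form w = x⁻¹s with s ∈ G, i.e. k = (g^x, x⁻¹s) for some s ∈ G}. If x ∈ X_{K,g,h}, then |X_{K,g,h}| is a multiple of |C_G(g)| and |X_{K,g,h}| ≤ |C_G(g)| · |Y_{K,g,x}|. -/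
open scoped Classical Pointwise

noncomputable section

namespace ZCPaper

variable {G : Type*} [Group G]

/-- For `X_{K,g,h} = {t : g^t ∈ hK}` and
`Y_{K,g,x} = {k ∈ K : k = (g^x, x⁻¹s) for some s}` (with `(a,b) = a⁻¹b⁻¹ab`,
`g^t = t⁻¹gt`): if `x ∈ X_{K,g,h}` then `|C_G(g)|` divides `|X_{K,g,h}|` and
`|X_{K,g,h}| ≤ |C_G(g)|⬝|Y_{K,g,x}|`. -/
theorem stmt13 {G : Type*} [Group G] [Fintype G] (K : Subgroup G) (g h x : G)
    (hx : x ∈ {t : G | h⁻¹ * (t⁻¹ * g * t) ∈ K}) :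
    Nat.card ↥(Subgroup.centralizer {g}) ∣
      {t : G | h⁻¹ * (t⁻¹ * g * t) ∈ K}.ncard ∧
    {t : G | h⁻¹ * (t⁻¹ * g * t) ∈ K}.ncard ≤
      Nat.card ↥(Subgroup.centralizer {g}) *
        {k : G | k ∈ K ∧ ∃ s : G,
          k = (x⁻¹ * g * x)⁻¹ * (x⁻¹ * s)⁻¹ * (x⁻¹ * g * x) * (x⁻¹ * s)}.ncard := by
  classical
  set C := Subgroup.centralizer ({g} : Set G) with hCdef
  set X : Set G := {t : G | h⁻¹ * (t⁻¹ * g * t) ∈ K} with hXdef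
  set Y : Set G := {k : G | k ∈ K ∧ ∃ s : G,
      k = (x⁻¹ * g * x)⁻¹ * (x⁻¹ * s)⁻¹ * (x⁻¹ * g * x) * (x⁻¹ * s)} with hYdef
  have hXfin : X.Finite := Set.toFinite _
  have hYfin : Y.Finite := Set.toFinite _
  set f : G → G := fun t => (x⁻¹ * g * x)⁻¹ * (t⁻¹ * g * t) with hfdef
  -- characterization of fibers of f
  have hfib : ∀ t0 t' : G, f t' = f t0 ↔ ∃ c ∈ C, t' = c * t0 := by
    intro t0 t'
    constructor
    · intro H
      have H' : t'⁻¹ * g * t' = t0⁻¹ * g * t0 := mul_left_cancel H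
      refine ⟨t' * t0⁻¹, ?_, by group⟩
      rw [Subgroup.mem_centralizer_iff]
      intro y hy
      rw [Set.mem_singleton_iff] at hy
      rw [hy]
      calc g * (t' * t0⁻¹) = t' * (t'⁻¹ * g * t') * t0⁻¹ := by group
        _ = t' * (t0⁻¹ * g * t0) * t0⁻¹ := by rw [H']
        _ = t' * t0⁻¹ * g := by group
    · rintro ⟨c, hc, rfl⟩
      have hcg : g * c = c * g := by
        have := Subgroup.mem_centralizer_iff.mp hc g (Set.mem_singleton g)
        exact this
      have : (c * t0)⁻¹ * g * (c * t0) = t0⁻¹ * g * t0 := by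
        have hgc : c⁻¹ * g * c = g := by
          rw [mul_assoc, hcg, ← mul_assoc, inv_mul_cancel, one_mul]
        calc (c * t0)⁻¹ * g * (c * t0) = t0⁻¹ * (c⁻¹ * g * c) * t0 := by group
          _ = t0⁻¹ * g * t0 := by rw [hgc]
      simp only [hfdef, this]
  -- membership in X depends only on t⁻¹gt
  have hXmem : ∀ t0 t' : G, f t' = f t0 → t0 ∈ X → t' ∈ X := by
    intro t0 t' H ht0
    have H' : t'⁻¹ * g * t' = t0⁻¹ * g * t0 := mul_left_cancel H
    simp only [hXdef, Set.mem_setOf_eq] at ht0 ⊢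
    rw [H']
    exact ht0
  -- finset versions
  set XF : Finset G := hXfin.toFinset with hXF
  set IF : Finset G := XF.image f with hIF
  set CF : Finset G := Finset.univ.filter (fun c => c ∈ C) with hCF
  have hCFcard : CF.card = Nat.card ↥C := by
    rw [Nat.card_eq_fintype_card, Fintype.card_subtype]
  -- each fiber is a coset of C
  have hfiber : ∀ y ∈ IF, (XF.filter (fun t => f t = y)).card = Nat.card ↥C := by
    intro y hy
    obtain ⟨t0, ht0, rfl⟩ := Finset.mem_image.mp hy
    have ht0X : t0 ∈ X := hXfin.mem_toFinset.mp ht0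
    have : XF.filter (fun t => f t = f t0) = CF.image (· * t0) := by
      ext t'
      simp only [Finset.mem_filter, Finset.mem_image, hCF, Finset.mem_univ, true_and,
        hXfin.mem_toFinset]
      constructor
      · rintro ⟨_, H⟩
        obtain ⟨c, hc, rfl⟩ := (hfib t0 t').mp H
        exact ⟨c, hc, rfl⟩
      · rintro ⟨c, hc, rfl⟩
        have H : f (c * t0) = f t0 := (hfib t0 _).mpr ⟨c, hc, rfl⟩
        exact ⟨hXfin.mem_toFinset.mpr (hXmem t0 _ H ht0X), H⟩
    rw [this, Finset.card_image_of_injective _ (mul_left_injective t0), hCFcard]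
  -- the counting identity
  have hcount : XF.card = Nat.card ↥C * IF.card := by
    rw [Finset.card_eq_sum_card_fiberwise (f := f) (t := IF)
      (fun t ht => Finset.mem_image_of_mem f ht)]
    rw [Finset.sum_congr rfl hfiber, Finset.sum_const, smul_eq_mul, mul_comm]
  have hXcard : X.ncard = XF.card := Set.ncard_eq_toFinset_card X hXfin
  -- image is contained in Y
  have hsub : (f '' X) ⊆ Y := by
    rintro _ ⟨t, ht, rfl⟩
    have ht' : h⁻¹ * (t⁻¹ * g * t) ∈ K := ht
    have hx' : h⁻¹ * (x⁻¹ * g * x) ∈ K := hx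
    constructor
    · have heq : f t = (h⁻¹ * (x⁻¹ * g * x))⁻¹ * (h⁻¹ * (t⁻¹ * g * t)) := by
        simp only [hfdef]; group
      rw [heq]
      exact K.mul_mem (K.inv_mem hx') ht'
    · exact ⟨t, by simp only [hfdef]; group⟩
  have hIFcard : (f '' X).ncard = IF.card := by
    rw [Set.ncard_eq_toFinset_card _ (hXfin.image f)]
    congr 1
    ext y
    simp [hIF, hXF, hXdef, hXfin.mem_toFinset, Set.Finite.mem_toFinset]
  constructor
  · exact ⟨IF.card, by rw [hXcard, hcount]⟩
  · calc X.ncard = Nat.card ↥C * (f '' X).ncard := by rw [hXcard, hcount, hIFcard]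
      _ ≤ Nat.card ↥C * Y.ncard :=
        Nat.mul_le_mul_left _ (Set.ncard_le_ncard hsub hYfin)

end ZCPaper
end
end

section
/- Let G be a finite group with a normal cyclic subgroup A such that G/A is Hamiltonian, let D = Z(C_G(A)) and let D₂ be the Sylow 2-subgroup of the abelian group D. If g ∈ G has odd order, then for every h ∈ G the commutator (g,h) = g⁻¹h⁻¹gh lies in the Hall 2'-subgroup A_{2'} of A (the unique subgroup of A of odd order and 2-power index), and g commutes with every element of D₂. -/
open scoped Classical Pointwise

noncomputable section

namespace ZCPaper

variable {G : Type*} [Group G]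

section Aux
variable {H : Type*} [Group H]

private lemma zc_conj_mem_zpowers (hH : ∀ K : Subgroup H, K.Normal) (x y : H) :
    y⁻¹ * x * y ∈ Subgroup.zpowers x := by
  have := (hH (Subgroup.zpowers x)).conj_mem x (Subgroup.mem_zpowers x) y⁻¹
  simpa using this

private lemma zc_comm_mem_left (hH : ∀ K : Subgroup H, K.Normal) (a b : H) :
    a⁻¹ * b⁻¹ * a * b ∈ Subgroup.zpowers a := by
  have h1 : b⁻¹ * a * b ∈ Subgroup.zpowers a := zc_conj_mem_zpowers hH a b
  have h2 : a⁻¹ * b⁻¹ * a * b = a⁻¹ * (b⁻¹ * a * b) := by group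
  rw [h2]
  exact mul_mem (inv_mem (Subgroup.mem_zpowers a)) h1

private lemma zc_comm_mem_right (hH : ∀ K : Subgroup H, K.Normal) (a b : H) :
    a⁻¹ * b⁻¹ * a * b ∈ Subgroup.zpowers b := by
  have h1 : a⁻¹ * b⁻¹ * a ∈ Subgroup.zpowers b := by
    have := (hH (Subgroup.zpowers b)).conj_mem b⁻¹ (inv_mem (Subgroup.mem_zpowers b)) a⁻¹
    simpa using this
  exact mul_mem h1 (Subgroup.mem_zpowers b)

private lemma zc_commute_of_mem_zpowers {a x : H} (h : x ∈ Subgroup.zpowers a) :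
    Commute a x := by
  obtain ⟨k, hk⟩ := Subgroup.mem_zpowers_iff.mp h
  exact hk ▸ (Commute.refl a).zpow_right k

private lemma zc_commute_of_eq_one {a b : H} (h : a⁻¹ * b⁻¹ * a * b = 1) : Commute a b := by
  have h2 : b⁻¹ * a * b = a := by
    calc b⁻¹ * a * b = a * (a⁻¹ * b⁻¹ * a * b) := by group
    _ = a := by rw [h, mul_one]
  calc a * b = b * (b⁻¹ * a * b) := by group
  _ = b * a := by rw [h2]

private lemma zc_eq_one_of_commute {a b : H} (h : Commute a b) : a⁻¹ * b⁻¹ * a * b = 1 := by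
  have h1 : a⁻¹ * b⁻¹ * a * b = a⁻¹ * b⁻¹ * (a * b) := by group
  rw [h1, h.eq]; group

private lemma zc_pow_right_comm {x y z : H} (h : y * x = x * y * z)
    (hzx : Commute z x) (hzy : Commute z y) (n : ℕ) :
    y ^ n * x = x * y ^ n * z ^ n := by
  induction n with
  | zero => simp
  | succ n ih =>
    calc y ^ (n+1) * x = y * (y ^ n * x) := by rw [pow_succ']; group
    _ = y * (x * y ^ n * z ^ n) := by rw [ih]
    _ = (y * x) * y ^ n * z ^ n := by group
    _ = (x * y * z) * y ^ n * z ^ n := by rw [h]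
    _ = x * y * (z * y ^ n) * z ^ n := by group
    _ = x * y * (y ^ n * z) * z ^ n := by rw [(hzy.pow_right n).eq]
    _ = x * y ^ (n+1) * z ^ (n+1) := by rw [pow_succ' y, pow_succ' z]; group

private lemma zc_mul_pow_choose {x y z : H} (h : y * x = x * y * z)
    (hzx : Commute z x) (hzy : Commute z y) (n : ℕ) :
    (x * y) ^ n = x ^ n * y ^ n * z ^ (n.choose 2) := by
  induction n with
  | zero => simp
  | succ n ih =>
    have hchoose : (n+1).choose 2 = n.choose 2 + n := by
      have h := Nat.choose_succ_succ' n 1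
      norm_num [Nat.choose_one_right] at h
      omega
    calc (x*y)^(n+1) = (x*y)^n * (x*y) := pow_succ _ n
    _ = x^n * y^n * z^(n.choose 2) * (x * y) := by rw [ih]
    _ = x^n * y^n * (z^(n.choose 2) * x) * y := by group
    _ = x^n * y^n * (x * z^(n.choose 2)) * y := by rw [(hzx.pow_left _).eq]
    _ = x^n * (y^n * x) * (z^(n.choose 2) * y) := by group
    _ = x^n * (y^n * x) * (y * z^(n.choose 2)) := by rw [(hzy.pow_left _).eq]
    _ = x^n * (x * y^n * z^n) * (y * z^(n.choose 2)) := by rw [zc_pow_right_comm h hzx hzy n]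
    _ = x^(n+1) * (y^n * (z^n * y)) * z^(n.choose 2) := by rw [pow_succ x]; group
    _ = x^(n+1) * (y^n * (y * z^n)) * z^(n.choose 2) := by rw [(hzy.pow_left n).eq]
    _ = x^(n+1) * y^(n+1) * (z^(n.choose 2) * z^n) := by rw [pow_succ' y]; group
    _ = x^(n+1) * y^(n+1) * z^((n+1).choose 2) := by rw [← pow_add, hchoose]

private lemma zc_commute_of_coprime (hH : ∀ K : Subgroup H, K.Normal) {a b : H}
    (h : Nat.Coprime (orderOf a) (orderOf b)) : Commute a b := by
  apply zc_commute_of_eq_one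
  have h1 := orderOf_dvd_of_mem_zpowers (zc_comm_mem_left hH a b)
  have h2 := orderOf_dvd_of_mem_zpowers (zc_comm_mem_right hH a b)
  have h3 : orderOf (a⁻¹ * b⁻¹ * a * b) ∣ 1 := h ▸ Nat.dvd_gcd h1 h2
  exact orderOf_eq_one_iff.mp (Nat.eq_one_of_dvd_one h3)

private lemma zc_baer (hH : ∀ K : Subgroup H, K.Normal) {p : ℕ} (hp : p.Prime) (hodd : Odd p) :
    ∀ k : ℕ, ∀ a b : H, ∀ α β : ℕ, orderOf a = p ^ α → orderOf b = p ^ β →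
      α + β ≤ k → Commute a b := by
  haveI : Fact p.Prime := ⟨hp⟩
  have hp0 : (p : ℤ) ≠ 0 := Int.natCast_ne_zero.mpr hp.pos.ne'
  intro k
  induction k with
  | zero =>
    intro a b α β ha hb hle
    have hα : α = 0 := by omega
    have ha1 : a = 1 := by rw [← orderOf_eq_one_iff, ha, hα, pow_zero]
    rw [ha1]; exact Commute.one_left b
  | succ k IH =>
    have key : ∀ a b : H, ∀ α β : ℕ, orderOf a = p ^ α → orderOf b = p ^ β →
        β ≤ α → α + β ≤ k + 1 → Commute a b := by
      intro a b α β ha hb hβα hsum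
      by_cases hβ0 : β = 0
      · have hb1 : b = 1 := by rw [← orderOf_eq_one_iff, hb, hβ0, pow_zero]
        rw [hb1]; exact Commute.one_right a
      have hβ1 : 1 ≤ β := Nat.one_le_iff_ne_zero.mpr hβ0
      have hα1 : 1 ≤ α := le_trans hβ1 hβα
      set c := a⁻¹ * b⁻¹ * a * b with hc_def
      by_cases hc1 : c = 1
      · exact zc_commute_of_eq_one hc1
      have hca := zc_comm_mem_left hH a b
      have hcb := zc_comm_mem_right hH a b
      have hcomm_ca : Commute a c := zc_commute_of_mem_zpowers hca
      have hcomm_cb : Commute b c := zc_commute_of_mem_zpowers hcb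
      have hconj : b⁻¹ * a * b = a * c := by rw [hc_def]; group
      -- a^p commutes with b, whence c^p = 1
      have hfina : IsOfFinOrder a := orderOf_pos_iff.mp (by rw [ha]; exact pow_pos hp.pos α)
      have hpa : orderOf (a ^ p) = p ^ (α - 1) := by
        rw [hfina.orderOf_pow, ha]
        have h1 : Nat.gcd (p ^ α) p = p := Nat.gcd_eq_right (dvd_pow_self p (by omega))
        have h2 : p ^ α / p = p ^ (α - 1) := by
          have h3 := Nat.pow_div hα1 hp.pos
          rwa [pow_one] at h3
        rw [h1, h2]
      have hapb : Commute (a ^ p) b := IH (a ^ p) b (α - 1) β hpa hb (by omega)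
      have haz : b⁻¹ * a ^ p * b = a ^ p := by
        calc b⁻¹ * a ^ p * b = b⁻¹ * (a ^ p * b) := by group
        _ = b⁻¹ * (b * a ^ p) := by rw [hapb.eq]
        _ = a ^ p := by group
      have hconjp : (b⁻¹ * a * b) ^ p = b⁻¹ * a ^ p * b := by
        simpa using conj_pow (i := p) (a := b⁻¹) (b := a)
      have hcp : c ^ p = 1 := by
        have h3 : a ^ p * c ^ p = a ^ p := by
          rw [← hcomm_ca.mul_pow, ← hconj, hconjp, haz]
        exact mul_left_cancel (h3.trans (mul_one _).symm)
      have hoc : orderOf c = p := orderOf_eq_prime hcp hc1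
      -- b-side exponents
      obtain ⟨s, hs⟩ := Subgroup.mem_zpowers_iff.mp hcb
      rw [← hc_def] at hs
      have hbz : b ^ ((p : ℤ) ^ β) = 1 := by
        rw [show ((p : ℤ) ^ β) = ((p ^ β : ℕ) : ℤ) by push_cast; ring, zpow_natCast, ← hb,
          pow_orderOf_eq_one]
      have hpow : (p : ℤ) ^ (β - 1) * p = (p : ℤ) ^ β := by
        rw [← pow_succ]; congr 1; omega
      have hbord : (p : ℤ) ^ β ∣ s * p := by
        have h4 : b ^ (s * (p : ℤ)) = 1 := by rw [zpow_mul, hs, zpow_natCast, hcp]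
        have h5 := orderOf_dvd_iff_zpow_eq_one.mpr h4
        rwa [hb, Nat.cast_pow] at h5
      have hs' : (p : ℤ) ^ (β - 1) ∣ s := by
        have h4 : (p : ℤ) ^ (β - 1) * p ∣ s * p := by rw [hpow]; exact hbord
        exact (mul_dvd_mul_iff_right hp0).mp h4
      obtain ⟨v, hv⟩ := hs'
      have hpv : ¬ (p : ℤ) ∣ v := by
        intro hdv
        obtain ⟨v₂, hv2⟩ := hdv
        apply hc1
        rw [← hs, hv, hv2]
        have hexp : (p : ℤ) ^ (β - 1) * ((p : ℤ) * v₂) = (p : ℤ) ^ β * v₂ := by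
          rw [← hpow]; ring
        rw [hexp, zpow_mul, hbz, one_zpow]
      have hcop : IsCoprime v (p : ℤ) := by
        rw [Int.isCoprime_iff_gcd_eq_one]
        have h5 : Nat.Coprime p v.natAbs :=
          (Nat.Prime.coprime_iff_not_dvd hp).mpr (fun hd => hpv (Int.natCast_dvd.mpr hd))
        have h6 : Int.gcd v (p : ℤ) = Nat.gcd v.natAbs p := by simp [Int.gcd]
        rw [h6]
        exact Nat.coprime_comm.mp h5
      obtain ⟨v', w', hbez⟩ := hcop
      have hbp : c ^ v' = b ^ ((p : ℤ) ^ (β - 1)) := by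
        rw [← hs, ← zpow_mul]
        have hsv : s * v' = (p : ℤ) ^ (β - 1) - w' * ((p : ℤ) ^ β) := by
          rw [hv, ← hpow]; linear_combination ((p : ℤ) ^ (β - 1)) * hbez
        rw [hsv, zpow_sub, mul_comm w', zpow_mul, hbz, one_zpow, inv_one, mul_one]
      -- a-side exponents
      obtain ⟨r₀, hr⟩ := Subgroup.mem_zpowers_iff.mp hca
      rw [← hc_def] at hr
      have hpowa : (p : ℤ) ^ (α - 1) * p = (p : ℤ) ^ α := by
        rw [← pow_succ]; congr 1; omega
      have haord : (p : ℤ) ^ α ∣ r₀ * p := by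
        have h4 : a ^ (r₀ * (p : ℤ)) = 1 := by rw [zpow_mul, hr, zpow_natCast, hcp]
        have h5 := orderOf_dvd_iff_zpow_eq_one.mpr h4
        rwa [ha, Nat.cast_pow] at h5
      have hr' : (p : ℤ) ^ (α - 1) ∣ r₀ := by
        have h4 : (p : ℤ) ^ (α - 1) * p ∣ r₀ * p := by rw [hpowa]; exact haord
        exact (mul_dvd_mul_iff_right hp0).mp h4
      obtain ⟨w, hw⟩ := hr'
      -- the descent element
      set t : ℤ := (p : ℤ) ^ (α - β) * w * v' with ht_def
      have hpp : (p : ℤ) ^ (α - β) * (p : ℤ) ^ (β - 1) = (p : ℤ) ^ (α - 1) := by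
        rw [← pow_add]; congr 1; omega
      have htn : t * ((p : ℤ) ^ (β - 1)) = r₀ * v' := by
        rw [hw, ht_def, ← hpp]; ring
      have hatn : a ^ (t * ((p : ℤ) ^ (β - 1))) = c ^ v' := by
        rw [htn, zpow_mul, hr]
      have hyx : a ^ (-t) * b = b * a ^ (-t) * c ^ (-t) := by
        have h5 : (b⁻¹ * a * b) ^ (-t) = b⁻¹ * a ^ (-t) * b := by
          simpa using conj_zpow (i := -t) (a := b⁻¹) (b := a)
        have h6 : b⁻¹ * a ^ (-t) * b = a ^ (-t) * c ^ (-t) := by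
          rw [← h5, hconj, hcomm_ca.mul_zpow]
        calc a ^ (-t) * b = b * (b⁻¹ * a ^ (-t) * b) := by group
        _ = b * (a ^ (-t) * c ^ (-t)) := by rw [h6]
        _ = b * a ^ (-t) * c ^ (-t) := by group
      have hz_x : Commute (c ^ (-t)) b := (hcomm_cb.symm).zpow_left (-t)
      have hz_y : Commute (c ^ (-t)) (a ^ (-t)) := ((hcomm_ca.symm).zpow_left (-t)).zpow_right (-t)
      have happ := zc_mul_pow_choose hyx hz_x hz_y (p ^ (β - 1))
      have hb_n : b ^ (p ^ (β - 1) : ℕ) = b ^ ((p : ℤ) ^ (β - 1)) := by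
        rw [← zpow_natCast]; congr 1
      have ha_n : (a ^ (-t)) ^ (p ^ (β - 1) : ℕ) = (c ^ v')⁻¹ := by
        rw [← zpow_natCast, ← zpow_mul]
        have h7 : -t * ((p ^ (β - 1) : ℕ) : ℤ) = -(t * ((p : ℤ) ^ (β - 1))) := by
          push_cast; ring
        rw [h7, zpow_neg, hatn]
      have hz_n : (c ^ (-t)) ^ ((p ^ (β - 1) : ℕ).choose 2) = 1 := by
        have hdvd : (p : ℤ) ∣ -t * (((p ^ (β - 1) : ℕ).choose 2 : ℤ)) := by
          by_cases hβ2 : β = 1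
          · simp [hβ2]
          · have hpn : p ∣ p ^ (β - 1) := dvd_pow_self p (by omega)
            have hodd_n : Odd (p ^ (β - 1)) := hodd.pow
            have h2d : 2 ∣ p ^ (β - 1) - 1 := by
              obtain ⟨t', ht'⟩ := hodd_n; omega
            have hdc : p ∣ (p ^ (β - 1)).choose 2 := by
              rw [Nat.choose_two_right, Nat.mul_div_assoc _ h2d]
              exact Dvd.dvd.mul_right hpn _
            exact Dvd.dvd.mul_left (Int.natCast_dvd_natCast.mpr hdc) (-t)
        have h8 : ((orderOf c : ℤ)) ∣ -t * (((p ^ (β - 1) : ℕ).choose 2 : ℤ)) := by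
          rwa [hoc]
        have h9 := orderOf_dvd_iff_zpow_eq_one.mp h8
        rw [← zpow_natCast, ← zpow_mul]
        exact h9
      have hb1 : (b * a ^ (-t)) ^ (p ^ (β - 1) : ℕ) = 1 := by
        rw [happ, ha_n, hz_n, mul_one, hb_n, ← hbp]
        simp
      obtain ⟨β₁, hβ₁le, hβ₁⟩ := (Nat.dvd_prime_pow hp).mp (orderOf_dvd_of_pow_eq_one hb1)
      have hcom1 : Commute a (b * a ^ (-t)) := IH a (b * a ^ (-t)) α β₁ ha hβ₁ (by omega)
      have hbeq : b = (b * a ^ (-t)) * a ^ t := by group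
      rw [hbeq]
      exact hcom1.mul_right ((Commute.refl a).zpow_right t)
    intro a b α β ha hb hsum
    rcases le_total β α with h | h
    · exact key a b α β ha hb h hsum
    · exact (key b a β α hb ha h (by omega)).symm

private lemma zc_odd_of_dvd {m n : ℕ} (h : n ∣ m) (hm : Odd m) : Odd n := by
  rcases Nat.even_or_odd n with he | ho
  · exfalso
    have h2 : 2 ∣ m := (he.two_dvd).trans h
    rw [Nat.odd_iff] at hm
    obtain ⟨c, hc⟩ := h2
    omega
  · exact ho

private lemma zc_split {b : H} (hb : 0 < orderOf b)
    (h : ∀ q β : ℕ, q.Prime → orderOf b ≠ q ^ β) :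
    ∃ b₁ b₂ : H, ∃ x y : ℤ,
      b = b₁ ^ x * b₂ ^ y ∧
      orderOf b₁ < orderOf b ∧ orderOf b₂ < orderOf b ∧
      orderOf b₁ ∣ orderOf b ∧ orderOf b₂ ∣ orderOf b := by
  set m := orderOf b with hm_def
  have hm1 : m ≠ 1 := fun h1 => h 2 0 Nat.prime_two (by rw [h1, pow_zero])
  have hq : (m.minFac).Prime := Nat.minFac_prime hm1
  set q := m.minFac with hq_def
  set γ := m.factorization q with hγ_def
  have hγ1 : 0 < γ := hq.factorization_pos_of_dvd hb.ne' (Nat.minFac_dvd m)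
  set m₁ := q ^ γ with hm₁_def
  set m₂ := m / m₁ with hm₂_def
  have hmul : m₁ * m₂ = m := Nat.ordProj_mul_ordCompl_eq_self m q
  have hm₁_dvd : m₁ ∣ m := Nat.ordProj_dvd m q
  have hm₂_dvd : m₂ ∣ m := Nat.ordCompl_dvd m q
  have hm₁_1 : 1 < m₁ := Nat.one_lt_pow hγ1.ne' hq.one_lt
  have hm₂_1 : 1 < m₂ := by
    rcases Nat.lt_or_ge m₂ 2 with h2 | h2
    · interval_cases m₂
      · omega
      · exact absurd (by omega : m = m₁) (h q γ hq)
    · omega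
  have hfin : IsOfFinOrder b := orderOf_pos_iff.mp hb
  have hord₁ : orderOf (b ^ m₁) = m₂ := by
    rw [hfin.orderOf_pow, ← hm_def, Nat.gcd_eq_right hm₁_dvd]
  have hord₂ : orderOf (b ^ m₂) = m₁ := by
    rw [hfin.orderOf_pow, ← hm_def, Nat.gcd_eq_right hm₂_dvd, ← hmul,
      Nat.mul_div_cancel _ (by omega : 0 < m₂)]
  have hcop : Nat.Coprime m₁ m₂ := Nat.Coprime.pow_left γ (Nat.coprime_ordCompl hq hb.ne')
  obtain ⟨x, y, hxy⟩ := Nat.isCoprime_iff_coprime.mpr hcop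
  have hsplit : b = (b ^ m₁) ^ x * (b ^ m₂) ^ y := by
    rw [← zpow_natCast b m₁, ← zpow_natCast b m₂, ← zpow_mul, ← zpow_mul, ← zpow_add]
    have hexp : (m₁ : ℤ) * x + (m₂ : ℤ) * y = 1 := by linear_combination hxy
    rw [hexp, zpow_one]
  have hlt₁ : m₂ < m := by nlinarith
  have hlt₂ : m₁ < m := by nlinarith
  exact ⟨b ^ m₁, b ^ m₂, x, y, hsplit, by rw [hord₁]; exact hlt₁, by rw [hord₂]; exact hlt₂,
    by rw [hord₁]; exact hm₂_dvd, by rw [hord₂]; exact hm₁_dvd⟩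

private lemma zc_commute_odd_pp [Finite H] (hH : ∀ K : Subgroup H, K.Normal) :
    ∀ N : ℕ, ∀ a : H, orderOf a ≤ N → Odd (orderOf a) →
      ∀ b : H, (∃ q β : ℕ, q.Prime ∧ orderOf b = q ^ β) → Commute a b := by
  intro N
  induction N with
  | zero =>
    intro a haN _ b _
    exact absurd (isOfFinOrder_of_finite a).orderOf_pos (by omega)
  | succ N IH =>
    intro a haN haodd b hb
    obtain ⟨q, β, hq, hqb⟩ := hb
    by_cases hpp : ∃ p α : ℕ, p.Prime ∧ orderOf a = p ^ α
    · obtain ⟨p, α, hp, hpa⟩ := hpp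
      by_cases hα0 : α = 0
      · have ha1 : a = 1 := orderOf_eq_one_iff.mp (by rw [hpa, hα0, pow_zero])
        rw [ha1]; exact Commute.one_left b
      by_cases hpq : p = q
      · subst hpq
        have hpodd : Odd p := by
          rcases hp.eq_two_or_odd' with h2 | ho
          · exfalso
            rw [hpa, h2] at haodd
            rw [Nat.odd_iff] at haodd
            obtain ⟨c, hc⟩ := dvd_pow_self 2 hα0
            omega
          · exact ho
        exact zc_baer hH hp hpodd (α + β) a b α β hpa hqb le_rfl
      · apply zc_commute_of_coprime hH
        rw [hpa, hqb]
        exact ((Nat.coprime_primes hp hq).mpr hpq).pow α β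
    · push_neg at hpp
      obtain ⟨a₁, a₂, x, y, heq, hlt₁, hlt₂, hdvd₁, hdvd₂⟩ :=
        zc_split (isOfFinOrder_of_finite a).orderOf_pos (fun q' β' hq' => hpp q' β' hq')
      have hc₁ := IH a₁ (by omega) (zc_odd_of_dvd hdvd₁ haodd) b ⟨q, β, hq, hqb⟩
      have hc₂ := IH a₂ (by omega) (zc_odd_of_dvd hdvd₂ haodd) b ⟨q, β, hq, hqb⟩
      rw [heq]
      exact (hc₁.zpow_left x).mul_left (hc₂.zpow_left y)

private lemma zc_odd_central [Finite H] (hH : ∀ K : Subgroup H, K.Normal)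
    {a : H} (ha : Odd (orderOf a)) (b : H) : Commute a b := by
  have main : ∀ N : ℕ, ∀ b : H, orderOf b ≤ N → Commute a b := by
    intro N
    induction N with
    | zero =>
      intro b hbN
      exact absurd (isOfFinOrder_of_finite b).orderOf_pos (by omega)
    | succ N IH =>
      intro b hbN
      by_cases hpp : ∃ q β : ℕ, q.Prime ∧ orderOf b = q ^ β
      · exact zc_commute_odd_pp hH (orderOf a) a le_rfl ha b hpp
      · push_neg at hpp
        obtain ⟨b₁, b₂, x, y, heq, hlt₁, hlt₂, _, _⟩ :=
          zc_split (isOfFinOrder_of_finite b).orderOf_pos (fun q' β' hq' => hpp q' β' hq')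
        have hc₁ := IH b₁ (by omega)
        have hc₂ := IH b₂ (by omega)
        rw [heq]
        exact (hc₁.zpow_right x).mul_right (hc₂.zpow_right y)
  exact main (orderOf b) b le_rfl

private lemma zc_geom_sum_odd {k : ℤ} (hk : Odd k) {m : ℕ} (hm : Odd m) :
    Odd (∑ i ∈ Finset.range m, k ^ i) := by
  have hmod : ∀ j : ℕ, (∑ i ∈ Finset.range j, k ^ i) % 2 = (j : ℤ) % 2 := by
    intro j
    induction j with
    | zero => simp
    | succ j ih =>
      rw [Finset.sum_range_succ]
      have hkj : Odd (k ^ j) := hk.pow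
      obtain ⟨c, hc⟩ := hkj
      push_cast
      omega
  rw [Int.odd_iff, hmod]
  rw [Nat.odd_iff] at hm
  omega

end Aux

/-- If `g` has odd order then all commutators `(g,h)` lie in
the (odd-order) Hall `2'`-subgroup of `A`, and `g` commutes with every element
of the Sylow `2`-subgroup of `D = Z(C_G(A))`. -/
theorem stmt16 {G : Type*} [Group G] [Fintype G]
    (A : Subgroup G) [A.Normal] (hA : IsCyclic ↥A)
    (hHam : IsHamiltonian (G ⧸ A))
    (C D : Subgroup G)
    (hC : C = Subgroup.centralizer (A : Set G))
    (hD : D = C ⊓ Subgroup.centralizer (C : Set G))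
    (g : G) (hg : Odd (orderOf g)) :
    (∀ h : G, g⁻¹ * h⁻¹ * g * h ∈ A ∧ Odd (orderOf (g⁻¹ * h⁻¹ * g * h))) ∧
    (∀ d ∈ D, (∃ k : ℕ, orderOf d = 2 ^ k) → Commute g d) := by
  classical
  haveI : Finite (G ⧸ A) := Quotient.finite _
  have hDed : ∀ K : Subgroup (G ⧸ A), K.Normal := hHam.2
  -- A is commutative
  obtain ⟨a₀, ha₀⟩ := hA.exists_generator
  have hAcomm : ∀ x ∈ A, ∀ y ∈ A, x * y = y * x := by
    intro x hx y hy
    obtain ⟨i, hi⟩ := Subgroup.mem_zpowers_iff.mp (ha₀ ⟨x, hx⟩)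
    obtain ⟨j, hj⟩ := Subgroup.mem_zpowers_iff.mp (ha₀ ⟨y, hy⟩)
    have hix : ((a₀ : G)) ^ i = x := by
      have := congrArg (Subtype.val) hi
      simpa using this
    have hjy : ((a₀ : G)) ^ j = y := by
      have := congrArg (Subtype.val) hj
      simpa using this
    rw [← hix, ← hjy]
    exact ((Commute.refl ((a₀ : G))).zpow_zpow i j).eq
  -- the image of g in G/A is central (odd-order elements of a Dedekind group are central)
  have hgA_odd : Odd (orderOf ((g : G ⧸ A))) :=
    zc_odd_of_dvd (orderOf_map_dvd (QuotientGroup.mk' A) g) hg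
  have part_a : ∀ h : G, g⁻¹ * h⁻¹ * g * h ∈ A := by
    intro h
    have hcomm := zc_odd_central hDed hgA_odd ((h : G ⧸ A))
    have h2 := zc_eq_one_of_commute hcomm
    have h1 : ((g⁻¹ * h⁻¹ * g * h : G) : G ⧸ A) = 1 := by
      simpa using h2
    exact (QuotientGroup.eq_one_iff _).mp h1
  -- the odd Hall subgroup K of A
  set n := Nat.card ↥A with hn_def
  have hn0 : n ≠ 0 := Nat.card_pos.ne'
  set e := n.factorization 2 with he_def
  set u := n / 2 ^ e with hu_def
  have h2eu : 2 ^ e * u = n := by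
    rw [hu_def, he_def]; exact Nat.ordProj_mul_ordCompl_eq_self n 2
  have hu_odd : Odd u := by
    have h3 := Nat.not_dvd_ordCompl Nat.prime_two hn0
    rw [← he_def, ← hu_def] at h3
    rw [Nat.odd_iff]
    omega
  have hApow : ∀ x, x ∈ A → x ^ n = 1 := by
    intro x hx
    have h1 := orderOf_dvd_natCard (⟨x, hx⟩ : ↥A)
    rw [Subgroup.orderOf_mk] at h1
    exact orderOf_dvd_iff_pow_eq_one.mp h1
  let K : Subgroup G :=
    { carrier := {x : G | x ∈ A ∧ x ^ u = 1}
      one_mem' := ⟨A.one_mem, one_pow u⟩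
      mul_mem' := by
        rintro x y ⟨hxA, hxu⟩ ⟨hyA, hyu⟩
        refine ⟨A.mul_mem hxA hyA, ?_⟩
        have hcomm : Commute x y := by
          unfold Commute SemiconjBy
          exact hAcomm x hxA y hyA
        rw [hcomm.mul_pow, hxu, hyu, one_mul]
      inv_mem' := by
        rintro x ⟨hxA, hxu⟩
        exact ⟨A.inv_mem hxA, by rw [inv_pow, hxu, inv_one]⟩ }
  have hK_mem : ∀ x : G, x ∈ K ↔ x ∈ A ∧ x ^ u = 1 := fun x => Iff.rfl
  haveI hKnorm : K.Normal := by
    constructor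
    intro x hx g'
    obtain ⟨hxA, hxu⟩ := hx
    refine ⟨(inferInstance : A.Normal).conj_mem x hxA g', ?_⟩
    rw [conj_pow, hxu]
    simp
  set π := QuotientGroup.mk' K with hπ_def
  set Abar := A.map π with hAbar_def
  haveI hAbarN : Abar.Normal :=
    Subgroup.Normal.map (inferInstance) π (QuotientGroup.mk'_surjective K)
  have hAbar_pow : ∀ ybar, ybar ∈ Abar → ybar ^ (2 ^ e) = 1 := by
    rintro _ ⟨x, hxA, rfl⟩
    rw [← map_pow]
    have hmem : x ^ (2 ^ e) ∈ K := ⟨A.pow_mem hxA _, by rw [← pow_mul, h2eu]; exact hApow x hxA⟩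
    exact (QuotientGroup.eq_one_iff _).mpr hmem
  haveI hAbarCyc : IsCyclic ↥Abar := isCyclic_of_surjective (π.subgroupMap A) (π.subgroupMap_surjective A)
  obtain ⟨σ, hσ⟩ := hAbarCyc.exists_generator
  set gb : G ⧸ K := ((g : G ⧸ K)) with hgb_def
  have hgb_odd : Odd (orderOf gb) := zc_odd_of_dvd (orderOf_map_dvd π g) hg
  set m := orderOf gb with hm_def
  have hm_ne : m ≠ 0 := by
    rw [Nat.odd_iff] at hgb_odd
    omega
  have hs_pow : ((σ : G ⧸ K)) ^ (2 ^ e) = 1 := hAbar_pow _ σ.2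
  have hcomm_gs : Commute gb ((σ : G ⧸ K)) := by
    rcases eq_or_ne ((σ : G ⧸ K)) 1 with h1 | h1
    · rw [h1]; exact Commute.one_right gb
    have hconj_mem : gb⁻¹ * (σ : G ⧸ K) * gb ∈ Abar := by
      have := hAbarN.conj_mem _ σ.2 gb⁻¹
      simpa using this
    obtain ⟨kk, hkk⟩ : ∃ kk : ℤ, ((σ : G ⧸ K)) ^ kk = gb⁻¹ * (σ : G ⧸ K) * gb := by
      obtain ⟨kk, hkk⟩ := Subgroup.mem_zpowers_iff.mp (hσ ⟨_, hconj_mem⟩)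
      refine ⟨kk, ?_⟩
      have := congrArg (Subtype.val) hkk
      simpa using this
    have hiter : ∀ j : ℕ, (gb ^ j)⁻¹ * (σ : G ⧸ K) * gb ^ j = ((σ : G ⧸ K)) ^ (kk ^ j) := by
      intro j
      induction j with
      | zero => simp
      | succ j ih =>
        rw [pow_succ gb j, mul_inv_rev]
        calc gb⁻¹ * (gb ^ j)⁻¹ * (σ : G ⧸ K) * (gb ^ j * gb)
            = gb⁻¹ * ((gb ^ j)⁻¹ * (σ : G ⧸ K) * gb ^ j) * gb := by group
          _ = gb⁻¹ * ((σ : G ⧸ K)) ^ (kk ^ j) * gb := by rw [ih]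
          _ = (gb⁻¹ * (σ : G ⧸ K) * gb) ^ (kk ^ j) := by
              have h6 := conj_zpow (i := kk ^ j) (a := gb⁻¹) (b := (σ : G ⧸ K))
              simpa using h6.symm
          _ = (((σ : G ⧸ K)) ^ kk) ^ (kk ^ j) := by rw [hkk]
          _ = ((σ : G ⧸ K)) ^ (kk ^ (j+1)) := by
              rw [← zpow_mul]; congr 1; rw [pow_succ]; ring
    have hfix_m : ((σ : G ⧸ K)) ^ (kk ^ m) = (σ : G ⧸ K) := by
      have h7 := hiter m
      rw [pow_orderOf_eq_one gb] at h7
      simpa using h7.symm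
    have hdvd1 : ((orderOf ((σ : G ⧸ K))) : ℤ) ∣ kk ^ m - 1 := by
      apply orderOf_dvd_iff_zpow_eq_one.mpr
      rw [zpow_sub, hfix_m, zpow_one]
      simp
    obtain ⟨f, hf_le, hf⟩ := (Nat.dvd_prime_pow Nat.prime_two).mp
      (orderOf_dvd_of_pow_eq_one hs_pow)
    have hf1 : 1 ≤ f := by
      rcases Nat.eq_zero_or_pos f with h0 | hpos
      · rw [h0, pow_zero] at hf
        exact absurd (orderOf_eq_one_iff.mp hf) h1
      · exact hpos
    have hkodd : Odd kk := by
      rcases Int.even_or_odd kk with hev | hodd'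
      · exfalso
        have h2d : (2 : ℤ) ∣ (orderOf ((σ : G ⧸ K)) : ℤ) := by
          rw [hf]; push_cast; exact dvd_pow_self 2 (by omega)
        have h3 := h2d.trans hdvd1
        obtain ⟨c1, hc1⟩ := hev
        have h4 : (2 : ℤ) ∣ kk ^ m := Dvd.dvd.pow ⟨c1, by omega⟩ hm_ne
        obtain ⟨c2, hc2⟩ := h3
        obtain ⟨c3, hc3⟩ := h4
        omega
      · exact hodd'
    have hSodd : Odd (∑ i ∈ Finset.range m, kk ^ i) := zc_geom_sum_odd hkodd hgb_odd
    have hcop : IsCoprime ((orderOf ((σ : G ⧸ K))) : ℤ) (∑ i ∈ Finset.range m, kk ^ i) := by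
      rw [hf]
      push_cast
      apply IsCoprime.pow_left
      rw [Int.isCoprime_iff_gcd_eq_one]
      have h5 : Nat.Coprime 2 (∑ i ∈ Finset.range m, kk ^ i).natAbs :=
        Nat.coprime_two_left.mpr (Int.natAbs_odd.mpr hSodd)
      simpa [Int.gcd] using h5
    have hdvd2 : ((orderOf ((σ : G ⧸ K))) : ℤ) ∣ kk - 1 := by
      apply hcop.dvd_of_dvd_mul_left
      rw [geom_sum_mul]
      exact hdvd1
    have hone : ((σ : G ⧸ K)) ^ (kk - 1) = 1 := orderOf_dvd_iff_zpow_eq_one.mp hdvd2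
    have hfix : ((σ : G ⧸ K)) ^ kk = (σ : G ⧸ K) := by
      have hkk1 : kk = (kk - 1) + 1 := by ring
      rw [hkk1, zpow_add, hone, one_mul, zpow_one]
    have hconj_eq : gb⁻¹ * (σ : G ⧸ K) * gb = (σ : G ⧸ K) := by rw [← hkk, hfix]
    have h8 : (σ : G ⧸ K) * gb = gb * (σ : G ⧸ K) := by
      calc (σ : G ⧸ K) * gb = gb * (gb⁻¹ * (σ : G ⧸ K) * gb) := by group
      _ = gb * (σ : G ⧸ K) := by rw [hconj_eq]
    exact h8.symm
  have hcomm_gAbar : ∀ ybar, ybar ∈ Abar → Commute gb ybar := by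
    intro ybar hy
    obtain ⟨j, hj⟩ := Subgroup.mem_zpowers_iff.mp (hσ ⟨ybar, hy⟩)
    have hj' : ((σ : G ⧸ K)) ^ j = ybar := by
      have := congrArg (Subtype.val) hj
      simpa using this
    rw [← hj']
    exact hcomm_gs.zpow_right j
  -- part 1
  have part1 : ∀ h : G, g⁻¹ * h⁻¹ * g * h ∈ A ∧ Odd (orderOf (g⁻¹ * h⁻¹ * g * h)) := by
    intro h
    have hcA : g⁻¹ * h⁻¹ * g * h ∈ A := part_a h
    have hcbar_mem : ((g⁻¹ * h⁻¹ * g * h : G) : G ⧸ K) ∈ Abar := ⟨_, hcA, rfl⟩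
    have hycomm : Commute gb ((g⁻¹ * h⁻¹ * g * h : G) : G ⧸ K) := hcomm_gAbar _ hcbar_mem
    have hyconj : ((h : G ⧸ K))⁻¹ * gb * (h : G ⧸ K)
        = gb * ((g⁻¹ * h⁻¹ * g * h : G) : G ⧸ K) := by
      have h9 : h⁻¹ * g * h = g * (g⁻¹ * h⁻¹ * g * h) := by group
      have e1 : ((h⁻¹ * g * h : G) : G ⧸ K) = ((h : G ⧸ K))⁻¹ * gb * (h : G ⧸ K) := by
        rw [hgb_def]
        simp [QuotientGroup.mk_mul, QuotientGroup.mk_inv]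
      have e2 : ((g * (g⁻¹ * h⁻¹ * g * h) : G) : G ⧸ K)
          = gb * ((g⁻¹ * h⁻¹ * g * h : G) : G ⧸ K) := by
        rw [hgb_def]
        simp [QuotientGroup.mk_mul]
      rw [← e1, h9]
      exact e2
    have hm1 : gb ^ m = 1 := pow_orderOf_eq_one gb
    have hpow1 : (((g⁻¹ * h⁻¹ * g * h : G) : G ⧸ K)) ^ m = 1 := by
      have h7 : (((h : G ⧸ K))⁻¹ * gb * (h : G ⧸ K)) ^ m = 1 := by
        have h8 : (((h : G ⧸ K))⁻¹ * gb * (h : G ⧸ K)) ^ m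
            = ((h : G ⧸ K))⁻¹ * gb ^ m * (h : G ⧸ K) := by
          simpa using conj_pow (i := m) (a := ((h : G ⧸ K))⁻¹) (b := gb)
        rw [h8, hm1]
        group
      rw [hyconj, hycomm.mul_pow, hm1, one_mul] at h7
      exact h7
    have hpow2 : (((g⁻¹ * h⁻¹ * g * h : G) : G ⧸ K)) ^ (2 ^ e) = 1 := hAbar_pow _ hcbar_mem
    have hord : orderOf (((g⁻¹ * h⁻¹ * g * h : G) : G ⧸ K)) ∣ Nat.gcd (2 ^ e) m :=
      Nat.dvd_gcd (orderOf_dvd_of_pow_eq_one hpow2) (orderOf_dvd_of_pow_eq_one hpow1)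
    have hgcd : Nat.gcd (2 ^ e) m = 1 :=
      Nat.Coprime.pow_left e (Nat.coprime_two_left.mpr hgb_odd)
    have hc1 : ((g⁻¹ * h⁻¹ * g * h : G) : G ⧸ K) = 1 :=
      orderOf_eq_one_iff.mp (Nat.eq_one_of_dvd_one (hgcd ▸ hord))
    have hcK : (g⁻¹ * h⁻¹ * g * h) ∈ K := (QuotientGroup.eq_one_iff _).mp hc1
    exact ⟨hcA, zc_odd_of_dvd (orderOf_dvd_of_pow_eq_one hcK.2) hu_odd⟩
  refine ⟨part1, ?_⟩
  -- part 2
  intro d hd hdord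
  obtain ⟨kpow, hk⟩ := hdord
  obtain ⟨hcA, hcodd⟩ := part1 d
  have hdc : Commute d (g⁻¹ * d⁻¹ * g * d) := by
    rw [hD] at hd
    have hcC : (g⁻¹ * d⁻¹ * g * d) ∈ C := by
      rw [hC, Subgroup.mem_centralizer_iff]
      intro x hx
      exact hAcomm x hx _ hcA
    have h5 := Subgroup.mem_centralizer_iff.mp (Subgroup.mem_inf.mp hd).2 _ hcC
    exact h5.symm
  have hgd_conj : d⁻¹ * g * d = g * (g⁻¹ * d⁻¹ * g * d) := by group
  have hiter2 : ∀ j : ℕ, (d ^ j)⁻¹ * g * d ^ j = g * (g⁻¹ * d⁻¹ * g * d) ^ j := by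
    intro j
    induction j with
    | zero => simp
    | succ j ih =>
      rw [pow_succ d, mul_inv_rev]
      have hstep : d⁻¹ * (g⁻¹ * d⁻¹ * g * d) ^ j * d = (g⁻¹ * d⁻¹ * g * d) ^ j := by
        calc d⁻¹ * (g⁻¹ * d⁻¹ * g * d) ^ j * d
            = d⁻¹ * ((g⁻¹ * d⁻¹ * g * d) ^ j * d) := by group
          _ = d⁻¹ * (d * (g⁻¹ * d⁻¹ * g * d) ^ j) := by rw [← (hdc.pow_right j).eq]
          _ = (g⁻¹ * d⁻¹ * g * d) ^ j := by group
      calc d⁻¹ * (d ^ j)⁻¹ * g * (d ^ j * d)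
          = d⁻¹ * ((d ^ j)⁻¹ * g * d ^ j) * d := by group
        _ = d⁻¹ * (g * (g⁻¹ * d⁻¹ * g * d) ^ j) * d := by rw [ih]
        _ = (d⁻¹ * g * d) * (d⁻¹ * (g⁻¹ * d⁻¹ * g * d) ^ j * d) := by group
        _ = (g * (g⁻¹ * d⁻¹ * g * d)) * (g⁻¹ * d⁻¹ * g * d) ^ j := by rw [hgd_conj, hstep]
        _ = g * (g⁻¹ * d⁻¹ * g * d) ^ (j+1) := by
            rw [pow_succ' (g⁻¹ * d⁻¹ * g * d) j, mul_assoc]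
  have hdpow : d ^ (2 ^ kpow) = 1 := by rw [← hk]; exact pow_orderOf_eq_one d
  have hfinal := hiter2 (2 ^ kpow)
  rw [hdpow] at hfinal
  simp only [inv_one, one_mul, mul_one] at hfinal
  have hcpow : (g⁻¹ * d⁻¹ * g * d) ^ (2 ^ kpow) = 1 :=
    mul_left_cancel (hfinal.symm.trans (mul_one g).symm)
  have hcdvd : orderOf (g⁻¹ * d⁻¹ * g * d) ∣ 2 ^ kpow := orderOf_dvd_of_pow_eq_one hcpow
  obtain ⟨i, hi_le, hi⟩ := (Nat.dvd_prime_pow Nat.prime_two).mp hcdvd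
  have hc_one : (g⁻¹ * d⁻¹ * g * d) = 1 := by
    apply orderOf_eq_one_iff.mp
    rcases Nat.eq_zero_or_pos i with h0 | hpos
    · rw [hi, h0, pow_zero]
    · exfalso
      rw [hi] at hcodd
      rw [Nat.odd_iff] at hcodd
      obtain ⟨c2, hc2⟩ := dvd_pow_self 2 hpos.ne'
      omega
  exact zc_commute_of_eq_one hc_one

end ZCPaper
end
end

section
/- Let G be a finite group such that the Zassenhaus Conjecture holds for every proper quotient of G, let u be a torsion element of V(ℤG), and let g ∈ G. Suppose there exists x ∈ G such that the cyclic subgroup ⟨(g,x)⟩ generated by the commutator (g,x) = g⁻¹x⁻¹gx is a nontrivial normal subgroup of G, the element (g,x) commutes with g, and (g,h) commutes with x for every h ∈ G. Then ε_g(u) ≥ 0. -/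
open scoped Classical Pointwise

noncomputable section

namespace ZCPaper

variable {G : Type*} [Group G]

/-! ### Auxiliary lemmas -/

/-- The partial augmentation as an additive monoid homomorphism. -/
def paHom (R : Type*) [Ring R] (g : G) : MonoidAlgebra R G →+ R :=
  AddMonoidHom.mk' (fun u => Finsupp.sum u.coeff fun x a => if IsConj g x then a else 0)
    (fun a b => Finsupp.sum_add_index' (fun _ => ite_self 0)
      (fun _ b₁ b₂ => by split <;> simp))

lemma paHom_single (R : Type*) [Ring R] (g x : G) (c : R) :
    paHom R g (MonoidAlgebra.single x c) = if IsConj g x then c else 0 :=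
  Finsupp.sum_single_index (h := fun y a => if IsConj g y then a else 0) (ite_self 0)

lemma pa_eq_paHom (u : MonoidAlgebra ℤ G) (g : G) : pa u g = paHom ℤ g u := rfl

lemma isConj_mul_comm (g x y : G) : IsConj g (x * y) ↔ IsConj g (y * x) := by
  have h : IsConj (x * y) (y * x) := isConj_iff.mpr ⟨x⁻¹, by group⟩
  exact ⟨fun h' => h'.trans h, fun h' => h'.trans h.symm⟩

lemma paHom_mul_comm (g : G) (a b : MonoidAlgebra ℚ G) :
    paHom ℚ g (a * b) = paHom ℚ g (b * a) := by
  rw [MonoidAlgebra.mul_def, MonoidAlgebra.mul_def]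
  simp only [map_finsuppSum, paHom_single]
  rw [Finsupp.sum_comm]
  refine Finsupp.sum_congr fun y _ => Finsupp.sum_congr fun x _ => ?_
  rw [isConj_mul_comm g x y]
  split
  · ring
  · rfl

lemma paHom_unit_conj (g : G) (v : (MonoidAlgebra ℚ G)ˣ) (w : MonoidAlgebra ℚ G) :
    paHom ℚ g ((↑v⁻¹ : MonoidAlgebra ℚ G) * w * ↑v) = paHom ℚ g w := by
  rw [paHom_mul_comm, ← mul_assoc, Units.mul_inv, one_mul]

lemma toQ_single_s18 (x : G) (c : ℤ) :
    toQ (MonoidAlgebra.single x c) = MonoidAlgebra.single x (c : ℚ) := by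
  show MonoidAlgebra.liftNC _ _ _ = _
  rw [MonoidAlgebra.liftNC_single]
  show MonoidAlgebra.single 1 (c : ℚ) * MonoidAlgebra.single x 1 = _
  rw [MonoidAlgebra.single_mul_single, one_mul, mul_one]

lemma paHom_toQ (g : G) (u : MonoidAlgebra ℤ G) :
    paHom ℚ g (toQ u) = (pa u g : ℚ) := by
  conv_lhs => rw [← MonoidAlgebra.sum_coeff_single u]
  rw [map_finsuppSum, map_finsuppSum]
  simp only [toQ_single_s18, paHom_single]
  unfold pa
  rw [Finsupp.sum, Finsupp.sum, Int.cast_sum]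
  exact Finset.sum_congr rfl fun x _ => by split <;> simp

/-- The "Claim": if for some `x ∈ G` the subgroup `⟨(g,x)⟩` is a
nontrivial normal subgroup of `G`, `(g,x)` commutes with `g`, and `(g,h)` commutes
with `x` for all `h ∈ G`, then `ε_g(u) ≥ 0`.  Here `(a,b) = a⁻¹b⁻¹ab`. -/
theorem stmt18 {G : Type*} [Group G] [Fintype G]
    (hquot : ZCProperQuotients G)
    (u : (MonoidAlgebra ℤ G)ˣ) (hu : IsOfFinOrder u)
    (haug : aug (u : MonoidAlgebra ℤ G) = 1)
    (g : G)
    (hx : ∃ x : G,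
      Subgroup.zpowers (g⁻¹ * x⁻¹ * g * x) ≠ ⊥ ∧
      (Subgroup.zpowers (g⁻¹ * x⁻¹ * g * x)).Normal ∧
      Commute (g⁻¹ * x⁻¹ * g * x) g ∧
      ∀ h : G, Commute (g⁻¹ * h⁻¹ * g * h) x) :
    0 ≤ pa (u : MonoidAlgebra ℤ G) g := by
  obtain ⟨x, hNbot, hNorm, hcg, hcx⟩ := hx
  set c : G := g⁻¹ * x⁻¹ * g * x with hc
  set N : Subgroup G := Subgroup.zpowers c with hN
  haveI : N.Normal := hNorm
  have hcx' : Commute c x := hcx x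
  have h1 : x⁻¹ * g * x = g * c := by rw [hc]; group
  have hcmx : ∀ m : ℤ, x⁻¹ * c ^ m * x = c ^ m := fun m => by
    calc x⁻¹ * c ^ m * x = x⁻¹ * (c ^ m * x) := by group
      _ = x⁻¹ * (x * c ^ m) := by rw [(hcx'.zpow_left m).eq]
      _ = c ^ m := by group
  have hcmx' : ∀ m : ℤ, x * c ^ m * x⁻¹ = c ^ m := fun m => by
    calc x * c ^ m * x⁻¹ = x * (c ^ m * x⁻¹) := by group
      _ = x * (x⁻¹ * c ^ m) := by rw [((hcx'.zpow_left m).inv_right).eq]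
      _ = c ^ m := by group
  have h2 : x * g * x⁻¹ = g * c⁻¹ := by
    have e2 : (x * g * x⁻¹) * (x * c ^ (1:ℤ) * x⁻¹) = g := by
      rw [zpow_one]
      calc (x * g * x⁻¹) * (x * c * x⁻¹) = x * (g * c) * x⁻¹ := by group
        _ = x * (x⁻¹ * g * x) * x⁻¹ := by rw [h1]
        _ = g := by group
    rw [hcmx' 1, zpow_one] at e2
    exact eq_mul_inv_iff_mul_eq.mpr e2
  have key : ∀ m : ℤ, (x ^ m)⁻¹ * g * x ^ m = g * c ^ m := by
    intro m
    induction m using Int.induction_on with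
    | zero => simp
    | succ k ih =>
      rw [zpow_add_one, mul_inv_rev]
      calc x⁻¹ * (x ^ (k:ℤ))⁻¹ * g * (x ^ (k:ℤ) * x)
          = x⁻¹ * ((x ^ (k:ℤ))⁻¹ * g * x ^ (k:ℤ)) * x := by group
        _ = x⁻¹ * (g * c ^ (k:ℤ)) * x := by rw [ih]
        _ = (x⁻¹ * g * x) * (x⁻¹ * c ^ (k:ℤ) * x) := by group
        _ = (g * c) * c ^ (k:ℤ) := by rw [h1, hcmx]
        _ = g * c ^ ((k:ℤ) + 1) := by rw [mul_assoc, ← zpow_one_add, add_comm]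
    | pred k ih =>
      rw [sub_eq_add_neg, add_comm, ← sub_eq_neg_add, zpow_sub_one, mul_inv_rev, inv_inv]
      calc x * (x ^ (-(k:ℤ)))⁻¹ * g * (x ^ (-(k:ℤ)) * x⁻¹)
          = x * ((x ^ (-(k:ℤ)))⁻¹ * g * x ^ (-(k:ℤ))) * x⁻¹ := by group
        _ = x * (g * c ^ (-(k:ℤ))) * x⁻¹ := by rw [ih]
        _ = (x * g * x⁻¹) * (x * c ^ (-(k:ℤ)) * x⁻¹) := by group
        _ = (g * c⁻¹) * c ^ (-(k:ℤ)) := by rw [h2, hcmx']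
        _ = g * c ^ (-(k:ℤ) - 1) := by
            rw [mul_assoc, ← zpow_neg_one, ← zpow_add, add_comm, ← sub_eq_add_neg]
  set π : G →* G ⧸ N := QuotientGroup.mk' N with hπ
  have hiff : ∀ y : G, IsConj (π g) (π y) ↔ IsConj g y := by
    intro y
    constructor
    · intro hconj
      obtain ⟨z, hz⟩ := isConj_iff.mp hconj
      obtain ⟨h, rfl⟩ := QuotientGroup.mk'_surjective N z
      have hmk : π (h * g * h⁻¹) = π y := by
        rw [map_mul, map_mul, map_inv]; exact hz
      obtain ⟨n, hn, hy⟩ := (QuotientGroup.mk'_eq_mk' N).mp hmk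
      obtain ⟨j, hj⟩ := Subgroup.mem_zpowers_iff.mp (hNorm.conj_mem n hn h⁻¹)
      refine isConj_iff.mpr ⟨h * (x ^ j)⁻¹, ?_⟩
      rw [mul_inv_rev, inv_inv]
      calc h * (x ^ j)⁻¹ * g * (x ^ j * h⁻¹)
          = h * ((x ^ j)⁻¹ * g * x ^ j) * h⁻¹ := by group
        _ = h * (g * c ^ j) * h⁻¹ := by rw [key j]
        _ = h * (g * (h⁻¹ * n * h⁻¹⁻¹)) * h⁻¹ := by rw [hj]
        _ = h * g * h⁻¹ * n := by group
        _ = y := hy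
    · intro hconj
      exact π.map_isConj hconj
  set p : MonoidAlgebra ℤ G →+* MonoidAlgebra ℤ (G ⧸ N) :=
    MonoidAlgebra.mapDomainRingHom ℤ π with hp
  set ub : (MonoidAlgebra ℤ (G ⧸ N))ˣ := Units.map p.toMonoidHom u with hub
  have hub_coe : (ub : MonoidAlgebra ℤ (G ⧸ N)) =
      MonoidAlgebra.ofCoeff (Finsupp.mapDomain π (u : MonoidAlgebra ℤ G).coeff) := rfl
  have hfin : IsOfFinOrder ub := (Units.map p.toMonoidHom).isOfFinOrder hu
  have haug' : aug (ub : MonoidAlgebra ℤ (G ⧸ N)) = 1 := by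
    rw [hub_coe]
    unfold aug
    rw [Finsupp.sum_mapDomain_index (fun _ => rfl) (fun _ _ _ => rfl)]
    exact haug
  have hpa : pa (ub : MonoidAlgebra ℤ (G ⧸ N)) (π g) = pa (u : MonoidAlgebra ℤ G) g := by
    rw [hub_coe]
    unfold pa
    rw [Finsupp.sum_mapDomain_index (fun b => by simp) (fun b m₁ m₂ => by split <;> simp)]
    refine Finsupp.sum_congr fun y _ => ?_
    by_cases hcase : IsConj g y
    · rw [if_pos ((hiff y).mpr hcase), if_pos hcase]
    · rw [if_neg (fun hh => hcase ((hiff y).mp hh)), if_neg hcase]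
  obtain ⟨h, v, hv⟩ := hquot N hNbot ub hfin haug'
  have hq : (0 : ℚ) ≤ ((pa (ub : MonoidAlgebra ℤ (G ⧸ N)) (π g) : ℤ) : ℚ) := by
    rw [← paHom_toQ, ← paHom_unit_conj (π g) v (toQ (ub : MonoidAlgebra ℤ (G ⧸ N))), hv,
      MonoidAlgebra.of_apply, paHom_single]
    split <;> norm_num
  rw [← hpa]
  exact_mod_cast hq

end ZCPaper
end
end
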